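/- arXiv:2506.15630 — 5 statements merged into one kernel-verified Lean document; each statement's English description precedes it below -/
import Mathlib

section
/- Define the loop decomposition 𝒟ec(p) := Dec^{n₀}(p, ∅), where n₀ is the number of loops in p and ∅ is the empty sequence of paths. Then, for all nodes i, j and every path p ∈ ℙ_{ij}: the first component of 𝒟ec(p) is a non-intersecting path from i to j (i.e. lies in 𝕍_{ij}), every entry of the second component of 𝒟ec(p) is a simple loop, and W_{𝒟ec(p)} = W_p. Moreover, the map p ↦ 𝒟ec(p) is injective on ℙ. (Paper's Lemma on the loop decomposition of a path.) -/
variable {N : ℕ}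

/-- The list of nodes visited by a list of edges `(i₁,j₁)⋯(i_L,j_L)`,
namely `[i₁, j₁, j₂, …, j_L]` (which equals `[i₁, …, i_L, j_L]` for a path). -/
def edgeNodes : List (Fin N × Fin N) → List (Fin N)
  | [] => []
  | e :: rest => e.1 :: ((e :: rest).map Prod.snd)

/-- An edge list is a path when consecutive edges are compatible: `jₗ = i_{ℓ+1}`. -/
def IsPathList (l : List (Fin N × Fin N)) : Prop :=
  l.Chain' fun e f => e.2 = f.1

/-- `l` is a path from `i` to `j`; the empty path `𝟎` is a path from `i` to `i` for every `i`. -/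
def PathFromTo (l : List (Fin N × Fin N)) (i j : Fin N) : Prop :=
  IsPathList l ∧
    ((l = [] ∧ i = j) ∨ ((edgeNodes l).head? = some i ∧ (edgeNodes l).getLast? = some j))

/-- A path is non-intersecting when the visited nodes are pairwise distinct. -/
def NonIntersecting (l : List (Fin N × Fin N)) : Prop :=
  (edgeNodes l).Nodup

/-- A loop: a nonempty path with `p(1) = p(|p|+1)`. -/
def IsLoop (l : List (Fin N × Fin N)) : Prop :=
  IsPathList l ∧ l ≠ [] ∧ (edgeNodes l).head? = (edgeNodes l).getLast?

/-- A simple loop: a loop whose only repeated visited node is the initial/terminal one. -/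
def IsSimpleLoop (l : List (Fin N × Fin N)) : Prop :=
  IsLoop l ∧ (edgeNodes l).dropLast.Nodup

/-- The weight `W_p` of a path: the product of the weights of its edges (`W_𝟎 = 1`). -/
def pathWeight (W : Matrix (Fin N) (Fin N) ℝ) (l : List (Fin N × Fin N)) : ℝ :=
  (l.map fun e => W e.1 e.2).prod

/-- The simple-path matrix `T⋆_{ij} = Σ_{p ∈ 𝕍_{ij}} W_p` (a sum over a finite set). -/
noncomputable def Tstar (W : Matrix (Fin N) (Fin N) ℝ) (i j : Fin N) : ℝ :=
  ∑' q : {l : List (Fin N × Fin N) // PathFromTo l i j ∧ NonIntersecting l}, pathWeight W q.1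

/-- The sum `c = Σ_{L ∈ 𝕊𝕃} W_L` of the weights of all simple loops. -/
noncomputable def slSum (W : Matrix (Fin N) (Fin N) ℝ) : ℝ :=
  ∑' L : {l : List (Fin N × Fin N) // IsSimpleLoop l}, pathWeight W L.1

/-- Helper: scan the node list keeping the list `seen` of previously visited nodes; returns
`some (m, x)` where `m` is the 0-based position of the first node `x` that was already
visited, and `none` if there is no such node. -/
def crossDataAux : List (Fin N) → List (Fin N) → Option (ℕ × Fin N)
  | _, [] => none
  | seen, a :: rest =>
    if a ∈ seen then some (seen.length, a) else crossDataAux (seen ++ [a]) rest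

/-- `crossData ns = some (m, x)` iff `m` is the smallest (0-based) index such that
`ns[m] = x` already occurs among `ns[0], …, ns[m-1]`; `none` iff `ns` has no duplicate.
In the paper's (1-based) notation, `m = ℓ_×(p) - 1` and `x = i_×(p)`. -/
def crossData (ns : List (Fin N)) : Option (ℕ × Fin N) :=
  crossDataAux [] ns

/-- `ℓ₀(p) - 1` in 0-based indexing: the first (0-based) position at which the first
crossing point of `p` is visited (junk value `0` if `p` is non-intersecting). -/
def ell0 (p : List (Fin N × Fin N)) : ℕ :=
  match crossData (edgeNodes p) with
  | none => 0
  | some (_, x) => (edgeNodes p).idxOf x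

/-- The first loop `L(p)`: the splice `p[ℓ₀(p), ℓ_×(p))`, and `𝟎` if `p` is non-intersecting. -/
def Lmap (p : List (Fin N × Fin N)) : List (Fin N × Fin N) :=
  match crossData (edgeNodes p) with
  | none => []
  | some (mx, x) => (p.drop ((edgeNodes p).idxOf x)).take (mx - (edgeNodes p).idxOf x)

/-- The remainder `E(p) = p[1, ℓ₀(p)) · p[ℓ_×(p), |p|+1)` after extracting the first loop,
and `E(p) = p` if `p` is non-intersecting. -/
def Emap (p : List (Fin N × Fin N)) : List (Fin N × Fin N) :=
  match crossData (edgeNodes p) with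
  | none => p
  | some (mx, x) => p.take ((edgeNodes p).idxOf x) ++ p.drop mx

/-- The single-step loop-extraction map
`Dec(p, (L₁,…,L_Q)) = (E(p), (L₁,…,L_Q, L(p)))` on pairs of a path and a list of paths. -/
def DecStep (X : List (Fin N × Fin N) × List (List (Fin N × Fin N))) :
    List (Fin N × Fin N) × List (List (Fin N × Fin N)) :=
  (Emap X.1, X.2 ++ [Lmap X.1])

/-- The extended weight `W_{(v,(L₁,…,L_Q))} = W_v · W_{L₁} ⋯ W_{L_Q}`. -/
def extWeight (W : Matrix (Fin N) (Fin N) ℝ)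
    (X : List (Fin N × Fin N) × List (List (Fin N × Fin N))) : ℝ :=
  pathWeight W X.1 * (X.2.map (pathWeight W)).prod

section AuxLemmas

lemma take_indexOf_not_mem {α} [DecidableEq α] (l : List α) (x : α) :
    x ∉ l.take (l.idxOf x) := by
  induction l with
  | nil => simp
  | cons a t ih =>
    by_cases h : a = x
    · subst h; simp [List.idxOf_cons_self]
    · rw [List.idxOf_cons_ne _ h]
      simp only [List.take_succ_cons, List.mem_cons]
      rintro (rfl | hm)
      · exact h rfl
      · exact ih hm

lemma indexOf_le_of_getElem {α} [DecidableEq α] {l : List α} {j : ℕ} (hj : j < l.length)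
    {x : α} (h : l[j] = x) : l.idxOf x ≤ j := by
  by_contra hlt
  push_neg at hlt
  apply take_indexOf_not_mem l x
  have hjlt : j < (l.take (l.idxOf x)).length := by
    simp only [List.length_take]
    omega
  have hx : (l.take (l.idxOf x))[j] = x := by rw [List.getElem_take]; exact h
  exact List.mem_iff_getElem.2 ⟨j, hjlt, hx⟩

lemma edgeNodes_ne_nil {l : List (Fin N × Fin N)} (h : l ≠ []) : edgeNodes l ≠ [] := by
  cases l with
  | nil => exact absurd rfl h
  | cons e rest => simp [edgeNodes]

lemma length_edgeNodes {l : List (Fin N × Fin N)} (h : l ≠ []) :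
    (edgeNodes l).length = l.length + 1 := by
  cases l with
  | nil => exact absurd rfl h
  | cons e rest => simp [edgeNodes]

lemma edgeNodes_getElem_zero {l : List (Fin N × Fin N)} (h : l ≠ [])
    (h' : 0 < (edgeNodes l).length) : (edgeNodes l)[0] = (l[0]'(by cases l <;> simp_all)).1 := by
  cases l with
  | nil => exact absurd rfl h
  | cons e rest => simp [edgeNodes]

lemma edgeNodes_getElem_snd {l : List (Fin N × Fin N)} {i : ℕ} (h : i < l.length)
    (h' : i + 1 < (edgeNodes l).length) : (edgeNodes l)[i+1] = l[i].2 := by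
  cases l with
  | nil => simp at h
  | cons e rest =>
    cases i with
    | zero => simp [edgeNodes]
    | succ j => simp [edgeNodes]

lemma edgeNodes_getElem_fst {l : List (Fin N × Fin N)} (hl : IsPathList l) {i : ℕ}
    (h : i < l.length) (h' : i < (edgeNodes l).length) : (edgeNodes l)[i] = l[i].1 := by
  cases i with
  | zero => exact edgeNodes_getElem_zero (by rintro rfl; simp at h) h'
  | succ j =>
    have h2 : (edgeNodes l)[j+1] = l[j].2 := edgeNodes_getElem_snd (by omega) h'
    rw [h2]
    have := List.isChain_iff_getElem.1 hl j (by omega)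
    simpa using this

lemma edgeNodes_take {l : List (Fin N × Fin N)} {k : ℕ} (hk : 1 ≤ k) :
    edgeNodes (l.take k) = (edgeNodes l).take (k + 1) := by
  cases l with
  | nil => simp [edgeNodes]
  | cons e rest =>
    cases k with
    | zero => omega
    | succ k' => simp [edgeNodes, List.map_take]

lemma edgeNodes_drop {l : List (Fin N × Fin N)} (hl : IsPathList l) {k : ℕ}
    (hk : k < l.length) : edgeNodes (l.drop k) = (edgeNodes l).drop k := by
  induction l generalizing k with
  | nil => simp at hk
  | cons e rest ih =>
    cases k with
    | zero => simp
    | succ k' =>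
      have hrest : rest ≠ [] := by
        intro h; subst h; simp at hk
      obtain ⟨f, rest', rfl⟩ := List.exists_cons_of_ne_nil hrest
      have hl' : IsPathList (f :: rest') := (List.isChain_cons.1 hl).2
      have hef : e.2 = f.1 := by
        have := List.isChain_iff_getElem.1 hl 0 (by simp)
        simpa using this
      rw [List.drop_succ_cons, ih hl' (by simp only [List.length_cons] at hk ⊢; omega)]
      simp [edgeNodes, hef]

lemma edgeNodes_append {l₁ l₂ : List (Fin N × Fin N)} (h : l₁ ≠ []) :
    edgeNodes (l₁ ++ l₂) = edgeNodes l₁ ++ l₂.map Prod.snd := by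
  cases l₁ with
  | nil => exact absurd rfl h
  | cons e rest => simp [edgeNodes]

end AuxLemmas

section CrossLemmas

lemma crossDataAux_none : ∀ (rest seen : List (Fin N)), seen.Nodup →
    (crossDataAux seen rest = none ↔ (seen ++ rest).Nodup) := by
  intro rest
  induction rest with
  | nil => intro seen hs; simp [crossDataAux, hs]
  | cons a t ih =>
    intro seen hs
    by_cases h : a ∈ seen
    · simp only [crossDataAux, if_pos h]
      constructor
      · intro hc; cases hc
      · intro hn
        exact absurd (by simp : a ∈ a :: t) ((List.disjoint_of_nodup_append hn) h)
    · simp only [crossDataAux, if_neg h]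
      rw [ih (seen ++ [a]) (by simp [List.nodup_append, hs, h]; rintro b hb rfl; exact h hb)]
      simp [List.append_assoc]

lemma crossDataAux_some : ∀ (rest seen : List (Fin N)) {m : ℕ} {x : Fin N}, seen.Nodup →
    crossDataAux seen rest = some (m, x) →
    ∃ k, ∃ hk : k < rest.length, m = seen.length + k ∧ rest[k] = x ∧
      x ∈ seen ++ rest.take k ∧ (seen ++ rest.take k).Nodup := by
  intro rest
  induction rest with
  | nil => intro seen m x hs hc; cases hc
  | cons a t ih =>
    intro seen m x hs hc
    by_cases h : a ∈ seen
    · simp only [crossDataAux, if_pos h, Option.some.injEq, Prod.mk.injEq] at hc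
      obtain ⟨rfl, rfl⟩ := hc
      exact ⟨0, by simp, by simp, by simp, by simpa using h, by simpa using hs⟩
    · simp only [crossDataAux, if_neg h] at hc
      obtain ⟨k, hk, hm, hget, hmem, hnd⟩ := ih (seen ++ [a]) (by simp [List.nodup_append, hs, h]; rintro b hb rfl; exact h hb) hc
      refine ⟨k+1, by simpa using hk, by simp at hm ⊢; omega, by simpa using hget, ?_, ?_⟩
      · simpa [List.append_assoc] using hmem
      · simpa [List.append_assoc] using hnd

lemma crossData_none_iff (ns : List (Fin N)) : crossData ns = none ↔ ns.Nodup := by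
  simpa [crossData] using crossDataAux_none ns [] (by simp)

lemma crossData_some {ns : List (Fin N)} {mx : ℕ} {x : Fin N}
    (hc : crossData ns = some (mx, x)) :
    ∃ h : mx < ns.length, ns[mx] = x ∧ x ∈ ns.take mx ∧ (ns.take mx).Nodup := by
  obtain ⟨k, hk, hm, hget, hmem, hnd⟩ := crossDataAux_some ns [] (by simp) hc
  have hm' : mx = k := by simpa using hm
  subst hm'
  exact ⟨hk, hget, by simpa using hmem, by simpa using hnd⟩

lemma cross_k_lt {ns : List (Fin N)} {mx : ℕ} {x : Fin N}
    (hc : crossData ns = some (mx, x)) : ns.idxOf x < mx := by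
  obtain ⟨hmx, hget, hmem, hnd⟩ := crossData_some hc
  obtain ⟨j, hj, hjx⟩ := List.mem_iff_getElem.1 hmem
  have hj' : j < mx := by simp [List.length_take] at hj; omega
  rw [List.getElem_take] at hjx
  have := indexOf_le_of_getElem (l := ns) (by omega) hjx
  omega

lemma cross_mem {ns : List (Fin N)} {mx : ℕ} {x : Fin N}
    (hc : crossData ns = some (mx, x)) : x ∈ ns := by
  obtain ⟨hmx, hget, hmem, hnd⟩ := crossData_some hc
  exact hget ▸ List.getElem_mem hmx

lemma cross_getElem_indexOf {ns : List (Fin N)} {mx : ℕ} {x : Fin N}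
    (hc : crossData ns = some (mx, x)) :
    ∀ h : ns.idxOf x < ns.length, ns[ns.idxOf x] = x := by
  intro h
  exact List.getElem_idxOf h

end CrossLemmas

section Structural

variable {p : List (Fin N × Fin N)} {mx : ℕ} {x : Fin N}

lemma Emap_of_none (h : crossData (edgeNodes p) = none) : Emap p = p := by
  unfold Emap; rw [h]

lemma Emap_of_some (hc : crossData (edgeNodes p) = some (mx, x)) :
    Emap p = p.take ((edgeNodes p).idxOf x) ++ p.drop mx := by
  unfold Emap; rw [hc]

lemma Lmap_of_some (hc : crossData (edgeNodes p) = some (mx, x)) :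
    Lmap p = (p.drop ((edgeNodes p).idxOf x)).take (mx - (edgeNodes p).idxOf x) := by
  unfold Lmap; rw [hc]

lemma cross_facts (hc : crossData (edgeNodes p) = some (mx, x)) :
    p ≠ [] ∧ (edgeNodes p).length = p.length + 1 ∧ (edgeNodes p).idxOf x < mx ∧
      mx ≤ p.length := by
  have h1 : p ≠ [] := by rintro rfl; simp [crossData, crossDataAux, edgeNodes] at hc
  have h2 := length_edgeNodes h1
  obtain ⟨hmx, -, -, -⟩ := crossData_some hc
  exact ⟨h1, h2, cross_k_lt hc, by omega⟩

lemma cross_getElem_mx (hc : crossData (edgeNodes p) = some (mx, x)) :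
    ∀ h : mx < (edgeNodes p).length, (edgeNodes p)[mx] = x := by
  intro h
  obtain ⟨h', hget, -, -⟩ := crossData_some hc
  exact hget

lemma length_Emap_lt (hc : crossData (edgeNodes p) = some (mx, x)) :
    (Emap p).length < p.length := by
  obtain ⟨h1, h2, h3, h4⟩ := cross_facts hc
  rw [Emap_of_some hc]
  simp only [List.length_append, List.length_take, List.length_drop]
  omega

lemma Emap_eq_self_iff : Emap p = p ↔ crossData (edgeNodes p) = none := by
  cases h : crossData (edgeNodes p) with
  | none => simp [Emap_of_none h]
  | some v =>
    obtain ⟨mx, x⟩ := v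
    have := length_Emap_lt h
    constructor
    · intro he; rw [he] at this; omega
    · intro he; cases he

lemma nonIntersecting_of_fix (h : Emap p = p) : (edgeNodes p).Nodup :=
  (crossData_none_iff _).1 (Emap_eq_self_iff.1 h)

lemma Emap_nil_facts (hc : crossData (edgeNodes p) = some (mx, x)) (hne : Emap p = []) :
    (edgeNodes p).idxOf x = 0 ∧ mx = p.length := by
  obtain ⟨h1, h2, h3, h4⟩ := cross_facts hc
  rw [Emap_of_some hc, List.append_eq_nil_iff] at hne
  obtain ⟨ht, hd⟩ := hne
  have hk0 : (edgeNodes p).idxOf x = 0 := by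
    have := congrArg List.length ht
    simp only [List.length_take, List.length_nil] at this
    omega
  have hmx : mx = p.length := by
    have := congrArg List.length hd
    simp only [List.length_drop, List.length_nil] at this
    omega
  exact ⟨hk0, hmx⟩

lemma edgeNodes_Lmap (hp : IsPathList p) (hc : crossData (edgeNodes p) = some (mx, x)) :
    edgeNodes (Lmap p) =
      ((edgeNodes p).drop ((edgeNodes p).idxOf x)).take (mx - (edgeNodes p).idxOf x + 1) := by
  obtain ⟨h1, h2, h3, h4⟩ := cross_facts hc
  rw [Lmap_of_some hc, edgeNodes_take (by omega), edgeNodes_drop hp (by omega)]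

lemma edgeNodes_Emap (hp : IsPathList p) (hc : crossData (edgeNodes p) = some (mx, x))
    (hne : Emap p ≠ []) :
    edgeNodes (Emap p) =
      (edgeNodes p).take ((edgeNodes p).idxOf x) ++ (edgeNodes p).drop mx := by
  obtain ⟨h1, h2, h3, h4⟩ := cross_facts hc
  have hkx : (edgeNodes p)[(edgeNodes p).idxOf x]'(by omega) = x :=
    List.getElem_idxOf (by omega)
  have hmxx : (edgeNodes p)[mx]'(by omega) = x := cross_getElem_mx hc (by omega)
  by_cases hk : (edgeNodes p).idxOf x = 0
  · have hmxlt : mx < p.length := by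
      by_contra hge
      exact hne (by rw [Emap_of_some hc, hk]; simp [List.drop_eq_nil_of_le]; omega)
    rw [Emap_of_some hc, hk]
    simp only [List.take_zero, List.nil_append]
    exact edgeNodes_drop hp hmxlt
  · have hdropmx : (edgeNodes p).drop mx = x :: (edgeNodes p).drop (mx + 1) := by
      rw [List.drop_eq_getElem_cons (by omega : mx < (edgeNodes p).length), hmxx]
    have htakek : (edgeNodes p).take ((edgeNodes p).idxOf x + 1) =
        (edgeNodes p).take ((edgeNodes p).idxOf x) ++ [x] := by
      rw [List.take_succ]
      congr 1
      rw [List.getElem?_eq_getElem (by omega : (edgeNodes p).idxOf x < (edgeNodes p).length), hkx]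
      rfl
    have hsplit : edgeNodes (Emap p) =
        (edgeNodes p).take ((edgeNodes p).idxOf x + 1) ++ (p.map Prod.snd).drop mx := by
      rw [Emap_of_some hc,
        edgeNodes_append (by
          intro hcon
          have := congrArg List.length hcon
          simp only [List.length_take, List.length_nil] at this
          omega),
        edgeNodes_take (by omega), List.map_drop]
    have h4' : (edgeNodes p).drop (mx + 1) = (p.map Prod.snd).drop mx := by
      obtain ⟨e, rest, rfl⟩ := List.exists_cons_of_ne_nil h1
      simp [edgeNodes, List.drop_succ_cons]
    rw [hsplit, htakek, hdropmx, h4']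
    simp

end Structural

section Structural2

variable {p : List (Fin N × Fin N)} {mx : ℕ} {x : Fin N}

lemma isPathList_Lmap (hp : IsPathList p) : IsPathList (Lmap p) := by
  cases h : crossData (edgeNodes p) with
  | none => unfold Lmap; rw [h]; exact List.isChain_nil
  | some v =>
    obtain ⟨mx, x⟩ := v
    rw [Lmap_of_some h]
    exact (hp.drop _).take _

lemma isPathList_Emap (hp : IsPathList p) : IsPathList (Emap p) := by
  cases h : crossData (edgeNodes p) with
  | none => rw [Emap_of_none h]; exact hp
  | some v =>
    obtain ⟨mx, x⟩ := v
    obtain ⟨h1, h2, h3, h4⟩ := cross_facts h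
    have hkx : ∀ hh : (edgeNodes p).idxOf x < (edgeNodes p).length,
        (edgeNodes p)[(edgeNodes p).idxOf x] = x := fun hh => List.getElem_idxOf hh
    rw [Emap_of_some h]
    refine List.isChain_append.2 ⟨hp.take _, hp.drop _, ?_⟩
    intro a ha b hb
    generalize hK : (edgeNodes p).idxOf x = k at ha h3 hkx
    cases k with
    | zero => simp at ha
    | succ k' =>
      have hmxlt : mx < p.length := by
        rcases Nat.lt_or_ge mx p.length with h0 | h0
        · exact h0
        · rw [List.drop_eq_nil_of_le h0] at hb; simp at hb
      have hlenk : (p.take (k' + 1)).length = k' + 1 := by simp; omega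
      have ha' : a = p[k']'(by omega) := by
        rw [List.getLast?_eq_getElem?, hlenk, Nat.add_sub_cancel,
          List.getElem?_take_of_lt (by omega), List.getElem?_eq_getElem (by omega)] at ha
        exact (Option.mem_some_iff.1 ha).symm
      have hb' : b = p[mx]'(by omega) := by
        rw [List.head?_eq_getElem?, List.getElem?_drop, Nat.add_zero,
          List.getElem?_eq_getElem (by omega)] at hb
        exact (Option.mem_some_iff.1 hb).symm
      have hfst : (p[mx]'(by omega)).1 = x := by
        rw [← edgeNodes_getElem_fst hp (by omega) (by omega)]
        exact cross_getElem_mx h (by omega)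
      have hsnd : (p[k']'(by omega)).2 = x := by
        rw [← edgeNodes_getElem_snd (by omega) (by omega : k' + 1 < (edgeNodes p).length)]
        exact hkx (by omega)
      rw [ha', hb', hsnd, hfst]

lemma edgeNodes_Lmap_head (hp : IsPathList p) (hc : crossData (edgeNodes p) = some (mx, x)) :
    (edgeNodes (Lmap p)).head? = some x := by
  obtain ⟨h1, h2, h3, h4⟩ := cross_facts hc
  rw [edgeNodes_Lmap hp hc, List.head?_eq_getElem?,
    List.getElem?_eq_getElem (by simp; omega)]
  congr 1
  rw [List.getElem_take, List.getElem_drop]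
  simpa using List.getElem_idxOf (by omega)

lemma Lmap_ne_nil (hc : crossData (edgeNodes p) = some (mx, x)) : Lmap p ≠ [] := by
  obtain ⟨h1, h2, h3, h4⟩ := cross_facts hc
  rw [Lmap_of_some hc]
  intro hcon
  have := congrArg List.length hcon
  simp only [List.length_take, List.length_drop, List.length_nil] at this
  omega

lemma edgeNodes_Lmap_length (hp : IsPathList p) (hc : crossData (edgeNodes p) = some (mx, x)) :
    (edgeNodes (Lmap p)).length = mx - (edgeNodes p).idxOf x + 1 := by
  obtain ⟨h1, h2, h3, h4⟩ := cross_facts hc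
  rw [edgeNodes_Lmap hp hc]
  simp only [List.length_take, List.length_drop]
  omega

lemma isSimpleLoop_Lmap (hp : IsPathList p) (hc : crossData (edgeNodes p) = some (mx, x)) :
    IsSimpleLoop (Lmap p) := by
  obtain ⟨h1, h2, h3, h4⟩ := cross_facts hc
  obtain ⟨-, -, hmem, hnd⟩ := crossData_some hc
  refine ⟨⟨isPathList_Lmap hp, Lmap_ne_nil hc, ?_⟩, ?_⟩
  · rw [edgeNodes_Lmap_head hp hc, List.getLast?_eq_getElem?, edgeNodes_Lmap_length hp hc,
      edgeNodes_Lmap hp hc, Nat.add_sub_cancel,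
      List.getElem?_take_of_lt (by omega), List.getElem?_drop,
      show (edgeNodes p).idxOf x + (mx - (edgeNodes p).idxOf x) = mx by omega,
      List.getElem?_eq_getElem (by omega)]
    rw [cross_getElem_mx hc (by omega)]
  · rw [List.dropLast_eq_take, edgeNodes_Lmap_length hp hc, edgeNodes_Lmap hp hc,
      Nat.add_sub_cancel, List.take_take, inf_eq_left.2 (by omega),
      show List.take (mx - (edgeNodes p).idxOf x)
          (List.drop ((edgeNodes p).idxOf x) (edgeNodes p)) =
        List.drop ((edgeNodes p).idxOf x) (List.take mx (edgeNodes p)) from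
        List.drop_take.symm]
    exact (List.drop_sublist _ _).nodup hnd

end Structural2

section Structural3

variable {p : List (Fin N × Fin N)} {mx : ℕ} {x : Fin N}

lemma pathFromTo_Emap {i j : Fin N} (hpt : PathFromTo p i j)
    (hc : crossData (edgeNodes p) = some (mx, x)) : PathFromTo (Emap p) i j := by
  obtain ⟨hp, hor⟩ := hpt
  obtain ⟨h1, h2, h3, h4⟩ := cross_facts hc
  rcases hor with ⟨he, rfl⟩ | ⟨hh, hl⟩
  · exact absurd he h1
  have hi' : (edgeNodes p)[0]? = some i := by rw [← List.head?_eq_getElem?]; exact hh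
  have hj' : (edgeNodes p)[(edgeNodes p).length - 1]? = some j := by
    rw [← List.getLast?_eq_getElem?]; exact hl
  have hkx' : (edgeNodes p)[(edgeNodes p).idxOf x]? = some x := by
    rw [List.getElem?_eq_getElem (by omega : (edgeNodes p).idxOf x < (edgeNodes p).length)]
    rw [List.getElem_idxOf]
  have hmx' : (edgeNodes p)[mx]? = some x := by
    rw [List.getElem?_eq_getElem (by omega : mx < (edgeNodes p).length)]
    rw [cross_getElem_mx hc (by omega)]
  refine ⟨isPathList_Emap hp, ?_⟩
  by_cases hne : Emap p = []
  · obtain ⟨hk0, hmx⟩ := Emap_nil_facts hc hne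
    left
    refine ⟨hne, ?_⟩
    rw [hk0] at hkx'
    rw [hi'] at hkx'
    have hjx : j = x := by
      rw [h2, Nat.add_sub_cancel, ← hmx, hmx'] at hj'
      exact (Option.some.inj hj').symm
    rw [hjx]
    exact Option.some.inj hkx'
  · right
    have hEN := edgeNodes_Emap hp hc hne
    constructor
    · rw [hEN, List.head?_eq_getElem?]
      by_cases hk0 : (edgeNodes p).idxOf x = 0
      · rw [hk0]
        simp only [List.take_zero, List.nil_append]
        rw [List.getElem?_drop, Nat.add_zero, hmx']
        rw [hk0, hi'] at hkx'
        rw [Option.some.inj hkx']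
      · rw [List.getElem?_append_left (by simp only [List.length_take]; omega),
          List.getElem?_take_of_lt (by omega)]
        exact hi'
    · rw [hEN,
        List.getLast?_append_of_ne_nil _ (by
          intro hcon
          have := congrArg List.length hcon
          simp only [List.length_drop, List.length_nil] at this
          omega),
        List.getLast?_eq_getElem?, List.length_drop, List.getElem?_drop,
        show mx + ((edgeNodes p).length - mx - 1) = (edgeNodes p).length - 1 by omega]
      exact hj'

lemma pathWeight_append (W : Matrix (Fin N) (Fin N) ℝ) (a b : List (Fin N × Fin N)) :
    pathWeight W (a ++ b) = pathWeight W a * pathWeight W b := by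
  simp [pathWeight]

lemma split_take_drop (hc : crossData (edgeNodes p) = some (mx, x)) :
    p = p.take ((edgeNodes p).idxOf x) ++ (Lmap p ++ p.drop mx) := by
  obtain ⟨h1, h2, h3, h4⟩ := cross_facts hc
  rw [Lmap_of_some hc]
  conv_lhs => rw [← List.take_append_drop ((edgeNodes p).idxOf x) p]
  congr 1
  conv_lhs => rw [← List.take_append_drop (mx - (edgeNodes p).idxOf x)
    (p.drop ((edgeNodes p).idxOf x))]
  congr 1
  rw [List.drop_drop]
  congr 1
  omega

lemma weight_Emap_Lmap (W : Matrix (Fin N) (Fin N) ℝ)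
    (hc : crossData (edgeNodes p) = some (mx, x)) :
    pathWeight W (Emap p) * pathWeight W (Lmap p) = pathWeight W p := by
  rw [Emap_of_some hc]
  conv_rhs => rw [split_take_drop hc]
  rw [pathWeight_append, pathWeight_append, pathWeight_append]
  ring

def Recon (v L : List (Fin N × Fin N)) : List (Fin N × Fin N) :=
  match (edgeNodes L).head? with
  | none => v
  | some y => v.take ((edgeNodes v).idxOf y) ++ L ++ v.drop ((edgeNodes v).idxOf y)

lemma recon_eq (hp : IsPathList p) (hc : crossData (edgeNodes p) = some (mx, x)) :
    Recon (Emap p) (Lmap p) = p := by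
  obtain ⟨h1, h2, h3, h4⟩ := cross_facts hc
  have hR : Recon (Emap p) (Lmap p) =
      (Emap p).take ((edgeNodes (Emap p)).idxOf x) ++ Lmap p ++
        (Emap p).drop ((edgeNodes (Emap p)).idxOf x) := by
    unfold Recon
    rw [edgeNodes_Lmap_head hp hc]
  rw [hR]
  by_cases hne : Emap p = []
  · obtain ⟨hk0, hmx⟩ := Emap_nil_facts hc hne
    rw [hne]
    simp only [List.take_nil, List.drop_nil, List.append_nil, List.nil_append]
    rw [Lmap_of_some hc, hk0, hmx]
    simp
  · have hEN := edgeNodes_Emap hp hc hne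
    have hidx : (edgeNodes (Emap p)).idxOf x = (edgeNodes p).idxOf x := by
      rw [hEN, List.idxOf_append_of_notMem (take_indexOf_not_mem _ _),
        List.drop_eq_getElem_cons (by omega : mx < (edgeNodes p).length),
        cross_getElem_mx hc (by omega), List.idxOf_cons_self]
      simp only [List.length_take, Nat.add_zero]
      omega
    rw [hidx, Emap_of_some hc,
      List.take_left' (by simp only [List.length_take]; omega),
      List.drop_left' (by simp only [List.length_take]; omega),
      List.append_assoc]
    exact (split_take_drop hc).symm

end Structural3

section Iteration

variable {p : List (Fin N × Fin N)}

lemma DecStep_iterate_shift (n : ℕ) (v : List (Fin N × Fin N))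
    (ls : List (List (Fin N × Fin N))) :
    DecStep^[n] (v, ls) = ((DecStep^[n] (v, [])).1, ls ++ (DecStep^[n] (v, [])).2) := by
  induction n generalizing v ls with
  | zero => simp
  | succ n ih =>
    rw [Function.iterate_succ_apply, Function.iterate_succ_apply]
    show DecStep^[n] (Emap v, ls ++ [Lmap v]) =
      ((DecStep^[n] (Emap v, [Lmap v])).1, ls ++ (DecStep^[n] (Emap v, [Lmap v])).2)
    rw [ih (Emap v) (ls ++ [Lmap v]), ih (Emap v) [Lmap v]]
    simp

lemma DecStep_snd_length (n : ℕ) (p : List (Fin N × Fin N)) :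
    (DecStep^[n] (p, ([] : List (List (Fin N × Fin N))))).2.length = n := by
  induction n generalizing p with
  | zero => simp
  | succ n ih =>
    rw [Function.iterate_succ_apply]
    show (DecStep^[n] (Emap p, [Lmap p])).2.length = n + 1
    rw [DecStep_iterate_shift]
    simp [ih]

lemma DecStep_succ_eq (n : ℕ) (p : List (Fin N × Fin N)) :
    DecStep^[n+1] (p, ([] : List (List (Fin N × Fin N)))) =
      ((DecStep^[n] (Emap p, [])).1, [Lmap p] ++ (DecStep^[n] (Emap p, [])).2) := by
  rw [Function.iterate_succ_apply]
  show DecStep^[n] (Emap p, [Lmap p]) = _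
  exact DecStep_iterate_shift n (Emap p) [Lmap p]

lemma char_cross {n : ℕ} (h1 : Emap^[n] p ≠ Emap^[n+1] p) :
    ∃ mx x, crossData (edgeNodes p) = some (mx, x) := by
  cases h : crossData (edgeNodes p) with
  | some v =>
    obtain ⟨mx, x⟩ := v
    exact ⟨mx, x, rfl⟩
  | none =>
    exfalso
    have hfix : Emap p = p := Emap_of_none h
    exact h1 (by rw [Function.iterate_fixed hfix, Function.iterate_fixed hfix])

lemma char_shift {n : ℕ}
    (h1 : Emap^[n] p ≠ Emap^[n+1] p)
    (h2 : ∀ m : ℕ, n + 1 ≤ m → Emap^[m] p = Emap^[n+1] p) :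
    (n = 0 ∨ Emap^[n-1] (Emap p) ≠ Emap^[n] (Emap p)) ∧
      ∀ m : ℕ, n ≤ m → Emap^[m] (Emap p) = Emap^[n] (Emap p) := by
  constructor
  · cases n with
    | zero => exact Or.inl rfl
    | succ m =>
      right
      simp only [Nat.add_sub_cancel]
      rw [← Function.iterate_succ_apply, ← Function.iterate_succ_apply]
      exact h1
  · intro m hm
    rw [← Function.iterate_succ_apply, ← Function.iterate_succ_apply]
    exact h2 (m + 1) (by omega)

lemma char_one {n : ℕ} (hd : n + 1 = 0 ∨ Emap^[n+1-1] p ≠ Emap^[n+1] p) :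
    Emap^[n] p ≠ Emap^[n+1] p := by
  rcases hd with h0 | h1
  · omega
  · simpa using h1

end Iteration

section Main

lemma dec_sound (W : Matrix (Fin N) (Fin N) ℝ) :
    ∀ (n₀ : ℕ) (i j : Fin N) (p : List (Fin N × Fin N)),
      PathFromTo p i j →
      ((n₀ = 0 ∨ Emap^[n₀ - 1] p ≠ Emap^[n₀] p) ∧
        ∀ n : ℕ, n₀ ≤ n → Emap^[n] p = Emap^[n₀] p) →
      (PathFromTo (DecStep^[n₀] (p, [])).1 i j ∧ NonIntersecting (DecStep^[n₀] (p, [])).1) ∧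
      (∀ l ∈ (DecStep^[n₀] (p, [])).2, IsSimpleLoop l) ∧
      extWeight W (DecStep^[n₀] (p, [])) = pathWeight W p := by
  intro n₀
  induction n₀ with
  | zero =>
    intro i j p hpt hchar
    have hfix : Emap p = p := by simpa using hchar.2 1 (by omega)
    simp only [Function.iterate_zero, id_eq]
    refine ⟨⟨hpt, nonIntersecting_of_fix hfix⟩, ?_, ?_⟩
    · intro l hl; simp at hl
    · simp [extWeight]
  | succ n ih =>
    intro i j p hpt hchar
    have h1 : Emap^[n] p ≠ Emap^[n+1] p := char_one hchar.1
    obtain ⟨mx, x, hc⟩ := char_cross h1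
    have hp := hpt.1
    have hchar' := char_shift h1 hchar.2
    obtain ⟨⟨hPT, hNI⟩, hloops, hw⟩ := ih i j (Emap p) (pathFromTo_Emap hpt hc) hchar'
    rw [DecStep_succ_eq]
    refine ⟨⟨hPT, hNI⟩, ?_, ?_⟩
    · intro l hl
      simp only [List.singleton_append, List.mem_cons] at hl
      rcases hl with rfl | hl
      · exact isSimpleLoop_Lmap hp hc
      · exact hloops l hl
    · simp only [extWeight, List.singleton_append, List.map_cons, List.prod_cons]
      simp only [extWeight] at hw
      rw [show pathWeight W (DecStep^[n] (Emap p, [])).1 *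
          (pathWeight W (Lmap p) * (((DecStep^[n] (Emap p, [])).2.map (pathWeight W)).prod)) =
          (pathWeight W (DecStep^[n] (Emap p, [])).1 *
            ((DecStep^[n] (Emap p, [])).2.map (pathWeight W)).prod) * pathWeight W (Lmap p)
        by ring, hw]
      exact weight_Emap_Lmap W hc

lemma dec_inj :
    ∀ (n : ℕ) (p q : List (Fin N × Fin N)),
      IsPathList p → IsPathList q →
      ((n = 0 ∨ Emap^[n - 1] p ≠ Emap^[n] p) ∧ ∀ m : ℕ, n ≤ m → Emap^[m] p = Emap^[n] p) →
      ((n = 0 ∨ Emap^[n - 1] q ≠ Emap^[n] q) ∧ ∀ m : ℕ, n ≤ m → Emap^[m] q = Emap^[n] q) →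
      DecStep^[n] (p, []) = DecStep^[n] (q, []) → p = q := by
  intro n
  induction n with
  | zero =>
    intro p q _ _ _ _ heq
    simpa using congrArg Prod.fst heq
  | succ n ih =>
    intro p q hp hq hcp hcq heq
    have h1p : Emap^[n] p ≠ Emap^[n+1] p := char_one hcp.1
    have h1q : Emap^[n] q ≠ Emap^[n+1] q := char_one hcq.1
    obtain ⟨mx, x, hcxp⟩ := char_cross h1p
    obtain ⟨mx', x', hcxq⟩ := char_cross h1q
    rw [DecStep_succ_eq, DecStep_succ_eq] at heq
    rw [Prod.ext_iff] at heq
    obtain ⟨hfst, hsnd⟩ := heq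
    simp only [List.singleton_append, List.cons.injEq] at hsnd
    obtain ⟨hL, hS⟩ := hsnd
    have heq' : DecStep^[n] (Emap p, ([] : List (List (Fin N × Fin N)))) =
        DecStep^[n] (Emap q, []) := Prod.ext_iff.2 ⟨hfst, hS⟩
    have hE : Emap p = Emap q :=
      ih (Emap p) (Emap q) (isPathList_Emap hp) (isPathList_Emap hq)
        (char_shift h1p hcp.2) (char_shift h1q hcq.2) heq'
    rw [← recon_eq hp hcxp, ← recon_eq hq hcxq, hE, hL]

end Main

/-- Lemma `l:decIsInj`: the loop decomposition `𝒟ec(p) = Dec^{n₀}(p, ∅)` (where `n₀` is the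
number of loops in `p`, characterised as in Corollary `c:numberLoops`) sends a path
`p ∈ ℙ_{ij}` to a pair consisting of a non-intersecting path in `𝕍_{ij}` and a list of
simple loops, preserves the weight, and is injective on `ℙ`. -/
theorem loop_decomposition
    (N : ℕ) (hN : 1 ≤ N) (W : Matrix (Fin N) (Fin N) ℝ) :
    (∀ (i j : Fin N) (p : List (Fin N × Fin N)) (n₀ : ℕ),
      PathFromTo p i j →
      ((n₀ = 0 ∨ Emap^[n₀ - 1] p ≠ Emap^[n₀] p) ∧
        ∀ n : ℕ, n₀ ≤ n → Emap^[n] p = Emap^[n₀] p) →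
      (PathFromTo (DecStep^[n₀] (p, [])).1 i j ∧ NonIntersecting (DecStep^[n₀] (p, [])).1) ∧
      (∀ l ∈ (DecStep^[n₀] (p, [])).2, IsSimpleLoop l) ∧
      extWeight W (DecStep^[n₀] (p, [])) = pathWeight W p) ∧
    (∀ (p q : List (Fin N × Fin N)) (n₀ m₀ : ℕ),
      IsPathList p → IsPathList q →
      ((n₀ = 0 ∨ Emap^[n₀ - 1] p ≠ Emap^[n₀] p) ∧
        ∀ n : ℕ, n₀ ≤ n → Emap^[n] p = Emap^[n₀] p) →
      ((m₀ = 0 ∨ Emap^[m₀ - 1] q ≠ Emap^[m₀] q) ∧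
        ∀ n : ℕ, m₀ ≤ n → Emap^[n] q = Emap^[m₀] q) →
      DecStep^[n₀] (p, []) = DecStep^[m₀] (q, []) → p = q) := by
  constructor
  · intro i j p n₀ hpt hchar
    exact dec_sound W n₀ i j p hpt hchar
  · intro p q n₀ m₀ hp hq hcp hcq heq
    have hlen : n₀ = m₀ := by
      have h1 := DecStep_snd_length n₀ p
      have h2 := DecStep_snd_length m₀ q
      rw [heq] at h1
      omega
    subst hlen
    exact dec_inj n₀ p q hp hq hcp hcq heq
end

section
/- Let M ≥ 1, let A and A' be M×M real matrices with positive entries, let b ∈ ℝ^M have positive entries, and let c, c' > 0. Let Π be the (M+1)×(2M+1) matrix with block form (I_M, 0_{M×M}, 0_{M×1}; 0_{1×M}, 0_{1×M}, 1). Then for all n ∈ ℕ, componentwise, Π · [fromBlocks(diag(A)J, Kb; bᵀKᵀ, c)]ⁿ · fromBlocks(diag(A')K, 0_{2M×1}; 0_{1×M}, c') ≤ 2^{n+1} · [fromBlocks(A, b; bᵀ, c)]ⁿ · fromBlocks(A', 0_{M×1}; 0_{1×M}, c'), where fromBlocks(diag(A)J, Kb; bᵀKᵀ, c) is the (2M+1)×(2M+1)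 matrix assembled from the indicated blocks, fromBlocks(diag(A')K, 0; 0, c') is the (2M+1)×(M+1) matrix with top-left block diag(A')K = (A'; A') ∈ ℝ^{2M×M}, and fromBlocks(A, b; bᵀ, c) is the (M+1)×(M+1) matrix with the indicated blocks. (The unnamed block-matrix lemma in Section 9 of the paper.) -/
/-- The `2M × 2M` block matrix `J = (I, I; I, I)`. -/
def Jmat (M : ℕ) : Matrix (Fin M ⊕ Fin M) (Fin M ⊕ Fin M) ℝ :=
  Matrix.fromBlocks 1 1 1 1

/-- The `2M × M` block matrix `K = (I; I)`. -/
def Kmat (M : ℕ) : Matrix (Fin M ⊕ Fin M) (Fin M) ℝ :=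
  Matrix.fromRows 1 1

/-- The block-diagonal matrix `diag(A) = (A, 0; 0, A)`. -/
def diagTwo {M : ℕ} (A : Matrix (Fin M) (Fin M) ℝ) :
    Matrix (Fin M ⊕ Fin M) (Fin M ⊕ Fin M) ℝ :=
  Matrix.fromBlocks A 0 0 A

/-- A vector viewed as a column matrix. -/
def colMat {m : Type*} (w : m → ℝ) : Matrix m Unit ℝ := fun i _ => w i

/-- A vector viewed as a row matrix (the transpose `wᵀ`). -/
def rowMat {m : Type*} (w : m → ℝ) : Matrix Unit m ℝ := fun _ j => w j

/-- A scalar viewed as a `1 × 1` matrix. -/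
def scalarMat (c : ℝ) : Matrix Unit Unit ℝ := fun _ _ => c

/-- The `(M+1) × (2M+1)` matrix `Π = (I_M, 0, 0; 0, 0, 1)`. -/
def PiMat (M : ℕ) : Matrix (Fin M ⊕ Unit) ((Fin M ⊕ Fin M) ⊕ Unit) ℝ :=
  Matrix.fromBlocks (Matrix.fromCols 1 0) 0 0 1

/-- The `(2M+1) × (2M+1)` matrix `fromBlocks(diag(A)J, Kb; bᵀKᵀ, c)`. -/
def bigW {M : ℕ} (A : Matrix (Fin M) (Fin M) ℝ) (b : Fin M → ℝ) (c : ℝ) :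
    Matrix ((Fin M ⊕ Fin M) ⊕ Unit) ((Fin M ⊕ Fin M) ⊕ Unit) ℝ :=
  Matrix.fromBlocks (diagTwo A * Jmat M) (Kmat M * colMat b)
    (rowMat b * (Kmat M).transpose) (scalarMat c)

/-- The `(2M+1) × (M+1)` matrix `fromBlocks(diag(A')K, 0; 0, c')`. -/
def bigR {M : ℕ} (A' : Matrix (Fin M) (Fin M) ℝ) (c' : ℝ) :
    Matrix ((Fin M ⊕ Fin M) ⊕ Unit) (Fin M ⊕ Unit) ℝ :=
  Matrix.fromBlocks (diagTwo A' * Kmat M) 0 0 (scalarMat c')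

/-- The `(M+1) × (M+1)` matrix `fromBlocks(A, b; bᵀ, c)`. -/
def smallW {M : ℕ} (A : Matrix (Fin M) (Fin M) ℝ) (b : Fin M → ℝ) (c : ℝ) :
    Matrix (Fin M ⊕ Unit) (Fin M ⊕ Unit) ℝ :=
  Matrix.fromBlocks A (colMat b) (rowMat b) (scalarMat c)

/-- The `(M+1) × (M+1)` matrix `fromBlocks(A', 0; 0, c')`. -/
def smallR {M : ℕ} (A' : Matrix (Fin M) (Fin M) ℝ) (c' : ℝ) :
    Matrix (Fin M ⊕ Unit) (Fin M ⊕ Unit) ℝ :=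
  Matrix.fromBlocks A' 0 0 (scalarMat c')


open Matrix

section Aux

variable {M : ℕ}

/-- The embedding matrix `E = (K, 0; 0, 1)`. -/
def Emat (M : ℕ) : Matrix ((Fin M ⊕ Fin M) ⊕ Unit) (Fin M ⊕ Unit) ℝ :=
  Matrix.fromBlocks (Kmat M) 0 0 1

lemma one_entry_nonneg {m : Type*} [DecidableEq m] (i j : m) :
    (0:ℝ) ≤ (1 : Matrix m m ℝ) i j := by
  simp only [Matrix.one_apply]; split <;> norm_num

lemma PiE (M : ℕ) : PiMat M * Emat M = 1 := by
  rw [PiMat, Emat, Kmat, Matrix.fromBlocks_multiply]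
  simp [Matrix.fromCols_mul_fromRows, Matrix.fromBlocks_one]

lemma EsmallR (A' : Matrix (Fin M) (Fin M) ℝ) (c' : ℝ) :
    Emat M * smallR A' c' = bigR A' c' := by
  rw [Emat, smallR, bigR, Matrix.fromBlocks_multiply, diagTwo, Kmat,
    Matrix.fromBlocks_mul_fromRows]
  simp

lemma EsmallW (A : Matrix (Fin M) (Fin M) ℝ) (b : Fin M → ℝ) (c : ℝ) :
    Emat M * smallW A b c =
      Matrix.fromBlocks (Kmat M * A) (Kmat M * colMat b) (rowMat b) (scalarMat c) := by
  rw [Emat, smallW, Matrix.fromBlocks_multiply]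
  simp

lemma bigWE (A : Matrix (Fin M) (Fin M) ℝ) (b : Fin M → ℝ) (c : ℝ) :
    bigW A b c * Emat M =
      Matrix.fromBlocks (Kmat M * A + Kmat M * A) (Kmat M * colMat b)
        (rowMat b + rowMat b) (scalarMat c) := by
  rw [bigW, Emat, Matrix.fromBlocks_multiply]
  have hJK : Jmat M * Kmat M = Matrix.fromRows (1 + 1) (1 + 1) := by
    rw [Jmat, Kmat, Matrix.fromBlocks_mul_fromRows]; simp
  have h1 : diagTwo A * Jmat M * Kmat M = Kmat M * A + Kmat M * A := by
    rw [Matrix.mul_assoc, hJK, diagTwo, Matrix.fromBlocks_mul_fromRows, Kmat]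
    simp [Matrix.mul_add, Matrix.fromRows_mul, Matrix.mul_one, Matrix.one_mul]
    ext (i|i) j <;> simp [Matrix.fromRows_apply_inl, Matrix.fromRows_apply_inr, Matrix.add_apply]
  have h2 : rowMat b * (Kmat M).transpose * Kmat M = rowMat b + rowMat b := by
    rw [Matrix.mul_assoc, Kmat, Matrix.transpose_fromRows, Matrix.transpose_one,
      Matrix.fromCols_mul_fromRows]
    simp [Matrix.mul_add]
  rw [h1, h2]
  simp

lemma mul_entry_nonneg {l m n : Type*} [Fintype m] {X : Matrix l m ℝ} {Y : Matrix m n ℝ}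
    (hX : ∀ i j, 0 ≤ X i j) (hY : ∀ i j, 0 ≤ Y i j) : ∀ i j, 0 ≤ (X * Y) i j := by
  intro i j
  rw [Matrix.mul_apply]
  exact Finset.sum_nonneg fun k _ => mul_nonneg (hX i k) (hY k j)

lemma mul_entry_mono_right {l m n : Type*} [Fintype m] {X : Matrix l m ℝ} {Y Z : Matrix m n ℝ}
    (hX : ∀ i j, 0 ≤ X i j) (h : ∀ i j, Y i j ≤ Z i j) : ∀ i j, (X * Y) i j ≤ (X * Z) i j := by
  intro i j
  rw [Matrix.mul_apply, Matrix.mul_apply]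
  exact Finset.sum_le_sum fun k _ => mul_le_mul_of_nonneg_left (h k j) (hX i k)

lemma mul_entry_mono_left {l m n : Type*} [Fintype m] {X Y : Matrix l m ℝ} {Z : Matrix m n ℝ}
    (hZ : ∀ i j, 0 ≤ Z i j) (h : ∀ i j, X i j ≤ Y i j) : ∀ i j, (X * Z) i j ≤ (Y * Z) i j := by
  intro i j
  rw [Matrix.mul_apply, Matrix.mul_apply]
  exact Finset.sum_le_sum fun k _ => mul_le_mul_of_nonneg_right (h i k) (hZ k j)

lemma Kmat_nonneg (M : ℕ) : ∀ i j, 0 ≤ Kmat M i j := by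
  rintro (i|i) j <;> simpa [Kmat, Matrix.fromRows_apply_inl, Matrix.fromRows_apply_inr] using one_entry_nonneg i j

end Aux

/-- The unnamed block-matrix lemma in Section 9 of the paper. -/
theorem block_matrix_power_bound (M : ℕ) (hM : 1 ≤ M)
    (A A' : Matrix (Fin M) (Fin M) ℝ) (b : Fin M → ℝ) (c c' : ℝ)
    (hA : ∀ i j, 0 < A i j) (hA' : ∀ i j, 0 < A' i j) (hb : ∀ i, 0 < b i)
    (hc : 0 < c) (hc' : 0 < c') :
    ∀ (n : ℕ) (r : Fin M ⊕ Unit) (s : Fin M ⊕ Unit),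
      (PiMat M * bigW A b c ^ n * bigR A' c') r s ≤
        2 ^ (n + 1) * ((smallW A b c ^ n) * smallR A' c') r s  := by
  -- nonnegativity facts
  have hJnn : ∀ i j, 0 ≤ Jmat M i j := by
    rintro (i|i) (j|j) <;> simpa [Jmat] using one_entry_nonneg i j
  have hdAnn : ∀ i j, 0 ≤ diagTwo A i j := by
    rintro (i|i) (j|j) <;> simp [diagTwo] <;> exact (hA _ _).le
  have hcolnn : ∀ i j, 0 ≤ colMat b i j := fun i j => (hb i).le
  have hrownn : ∀ i j, 0 ≤ rowMat b i j := fun i j => (hb j).le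
  have hKTnn : ∀ i j, 0 ≤ (Kmat M).transpose i j := fun i j => Kmat_nonneg M j i
  have hWnn : ∀ i j, 0 ≤ bigW A b c i j := by
    rintro (x|u) (y|v)
    · simpa [bigW] using mul_entry_nonneg hdAnn hJnn x y
    · simpa [bigW] using mul_entry_nonneg (Kmat_nonneg M) hcolnn x v
    · simpa [bigW] using mul_entry_nonneg hrownn hKTnn u y
    · simpa [bigW, scalarMat] using hc.le
  have hsWnn : ∀ i j, 0 ≤ smallW A b c i j := by
    rintro (x|u) (y|v)
    · simpa [smallW] using (hA x y).le
    · simpa [smallW, colMat] using (hb x).le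
    · simpa [smallW, rowMat] using (hb y).le
    · simpa [smallW, scalarMat] using hc.le
  have hsRnn : ∀ i j, 0 ≤ smallR A' c' i j := by
    rintro (x|u) (y|v)
    · simpa [smallR] using (hA' x y).le
    · simp [smallR]
    · simp [smallR]
    · simpa [smallR, scalarMat] using hc'.le
  have hPinn : ∀ i j, 0 ≤ PiMat M i j := by
    rintro (x|u) ((y|y)|v)
    · simpa [PiMat, Matrix.fromCols] using one_entry_nonneg x y
    · simp [PiMat, Matrix.fromCols]
    · simp [PiMat]
    · simp [PiMat]
    · simp [PiMat]
    · simpa [PiMat] using one_entry_nonneg u v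
  have hsWpow : ∀ n, ∀ i j, 0 ≤ (smallW A b c ^ n) i j := by
    intro n
    induction n with
    | zero => intro i j; simpa using one_entry_nonneg i j
    | succ n ih => intro i j; rw [pow_succ]; exact mul_entry_nonneg ih hsWnn i j
  -- one-step inequality
  have hstep : ∀ i j, (bigW A b c * Emat M) i j ≤ ((2:ℝ) • (Emat M * smallW A b c)) i j := by
    rw [bigWE, EsmallW]
    rintro (x|u) (y|v)
    · simp [two_mul]
    · have := mul_entry_nonneg (Kmat_nonneg M) hcolnn x v
      simp only [Matrix.smul_apply, Matrix.fromBlocks_apply₁₂, smul_eq_mul]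
      linarith
    · simp [two_mul]
    · simp only [Matrix.smul_apply, Matrix.fromBlocks_apply₂₂, smul_eq_mul, scalarMat]
      linarith
  -- key induction
  have key : ∀ n : ℕ, ∀ (i : (Fin M ⊕ Fin M) ⊕ Unit) (j : Fin M ⊕ Unit),
      (bigW A b c ^ n * Emat M) i j ≤
      ((2 ^ n : ℝ) • (Emat M * smallW A b c ^ n)) i j := by
    intro n
    induction n with
    | zero => intro i j; simp
    | succ n ih =>
      intro i j
      have e1 : bigW A b c ^ (n + 1) * Emat M = bigW A b c * (bigW A b c ^ n * Emat M) := by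
        rw [pow_succ', Matrix.mul_assoc]
      calc (bigW A b c ^ (n + 1) * Emat M) i j
          = (bigW A b c * (bigW A b c ^ n * Emat M)) i j := by rw [e1]
        _ ≤ (bigW A b c * ((2 ^ n : ℝ) • (Emat M * smallW A b c ^ n))) i j :=
            mul_entry_mono_right hWnn ih i j
        _ = (2 ^ n : ℝ) * ((bigW A b c * Emat M) * smallW A b c ^ n) i j := by
            rw [Matrix.mul_smul, Matrix.smul_apply, smul_eq_mul, ← Matrix.mul_assoc]
        _ ≤ (2 ^ n : ℝ) * ((((2:ℝ) • (Emat M * smallW A b c)) * smallW A b c ^ n) i j) := by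
            have h := mul_entry_mono_left (hsWpow n) hstep i j
            exact mul_le_mul_of_nonneg_left h (by positivity)
        _ = ((2 ^ (n + 1) : ℝ) • (Emat M * smallW A b c ^ (n + 1))) i j := by
            rw [Matrix.smul_mul, Matrix.smul_apply, Matrix.smul_apply, smul_eq_mul, smul_eq_mul,
              Matrix.mul_assoc, ← pow_succ']
            ring
  intro n r s
  have e : PiMat M * bigW A b c ^ n * bigR A' c' =
      PiMat M * ((bigW A b c ^ n * Emat M) * smallR A' c') := by
    rw [← EsmallR, Matrix.mul_assoc, ← Matrix.mul_assoc (bigW A b c ^ n)]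
  have e2 : PiMat M * ((Emat M * smallW A b c ^ n) * smallR A' c') =
      smallW A b c ^ n * smallR A' c' := by
    rw [← Matrix.mul_assoc, ← Matrix.mul_assoc, PiE, Matrix.one_mul]
  have hx : 0 ≤ (smallW A b c ^ n * smallR A' c') r s :=
    mul_entry_nonneg (hsWpow n) hsRnn r s
  calc (PiMat M * bigW A b c ^ n * bigR A' c') r s
      = (PiMat M * ((bigW A b c ^ n * Emat M) * smallR A' c')) r s := by rw [e]
    _ ≤ (PiMat M * (((2 ^ n : ℝ) • (Emat M * smallW A b c ^ n)) * smallR A' c')) r s :=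
        mul_entry_mono_right hPinn (mul_entry_mono_left hsRnn (key n)) r s
    _ = (2 ^ n : ℝ) * (smallW A b c ^ n * smallR A' c') r s := by
        rw [Matrix.smul_mul, Matrix.mul_smul, Matrix.smul_apply, smul_eq_mul, e2]
    _ ≤ 2 ^ (n + 1) * (smallW A b c ^ n * smallR A' c') r s := by
        have : (2 ^ n : ℝ) ≤ 2 ^ (n + 1) := by
          apply pow_le_pow_right₀ (by norm_num) (by omega)
        exact mul_le_mul_of_nonneg_right this hx
end

section
/- Suppose that P : Z → Z⋆ is bijective, and set ρ := sup{‖ι(P^{-1}(Jh))‖_H : h ∈ H, ‖h‖_H ≤ 1}. Then P⋆ : Z → Z⋆ is bijective, and there exists a constant C > 0, depending only on C₀, c_G and C_G, such that ‖P^{-1}u‖_Z + ‖(P⋆)^{-1}u‖_Z ≤ C(1+ρ)‖u‖_{Z⋆} for all u ∈ Z⋆. Moreover, for every z ∈ ℂ with Im z ≠ 0, the operator 𝒫 − z : Z → Z⋆ is bijective and ‖(𝒫−z)^{-1}u‖_Z ≤ C(⟨z⟩/|Im z|)‖u‖_{Z⋆} for all u ∈ Z⋆, where ⟨z⟩ :=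 (1+|z|²)^{1/2}. (Paper's Proposition on resolvent bounds from Z⋆ to Z for abstract Helmholtz operators.) -/
open ContinuousLinearMap InnerProductSpace

local notation "⟪" x ", " y "⟫" => @inner ℂ _ _ x y

noncomputable def conjCLM : ℂ →L⋆[ℂ] ℂ := (starL ℂ : ℂ ≃L⋆[ℂ] ℂ)

@[simp] lemma conjCLM_apply (z : ℂ) : conjCLM z = starRingEnd ℂ z := rfl

section Aux

variable {Z : Type} [NormedAddCommGroup Z] [InnerProductSpace ℂ Z] [CompleteSpace Z]

/-- Riesz representation for continuous anti-linear functionals. -/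
lemma riesz_anti (u : Z →L⋆[ℂ] ℂ) : ∃ g : Z, ∀ v, u v = ⟪v, g⟫ := by
  refine ⟨(toDual ℂ Z).symm (conjCLM.comp u), fun v => ?_⟩
  have h := InnerProductSpace.toDual_symm_apply (𝕜 := ℂ) (E := Z)
    (y := conjCLM.comp u) (x := v)
  rw [← inner_conj_symm, h]
  simp

lemma quad_bound (t α β : ℝ) (ht : 0 ≤ t) (hα : 0 ≤ α) (hβ : 0 ≤ β)
    (h : t ^ 2 ≤ α * t + β) : t ≤ α + Real.sqrt β := by
  nlinarith [Real.sq_sqrt hβ, Real.sqrt_nonneg β]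

lemma le_of_sq_le_sq' (a b : ℝ) (ha : 0 ≤ a) (hb : 0 ≤ b) (h : a ^ 2 ≤ b ^ 2) : a ≤ b := by
  nlinarith

lemma norm_le_of_inner_le {H : Type} [NormedAddCommGroup H] [InnerProductSpace ℂ H]
    (x : H) (r : ℝ) (hr : 0 ≤ r) (hx : ∀ g : H, ‖g‖ ≤ 1 → ‖(inner ℂ x g : ℂ)‖ ≤ r) :
    ‖x‖ ≤ r := by
  rcases eq_or_ne x 0 with h | h
  · simpa [h] using hr
  · have hn : (0:ℝ) < ‖x‖ := norm_pos_iff.mpr h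
    have hg : ‖((‖x‖⁻¹ : ℝ) : ℂ) • x‖ ≤ 1 := by
      rw [norm_smul, Complex.norm_real, norm_inv, norm_norm]
      rw [inv_mul_cancel₀ hn.ne']
    have := hx _ hg
    rw [inner_smul_right, inner_self_eq_norm_sq_to_K] at this
    simp only [norm_mul, Complex.norm_real, RCLike.norm_ofReal, abs_norm, norm_inv,
      norm_norm, norm_pow] at this
    rwa [pow_two, ← mul_assoc, inv_mul_cancel₀ hn.ne', one_mul] at this

lemma norm_le_of_inner_self_le (y : Z) (t : ℝ) (ht : 0 ≤ t)
    (hc : ‖(⟪y, y⟫ : ℂ)‖ ≤ t * ‖y‖) : ‖y‖ ≤ t := by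
  rcases eq_or_ne y 0 with h | h
  · simpa [h] using ht
  · have hp : 0 < ‖y‖ := norm_pos_iff.mpr h
    rw [inner_self_eq_norm_sq_to_K] at hc
    simp only [norm_pow, RCLike.norm_ofReal, abs_norm] at hc
    nlinarith

/-- A Hilbert-space operator which is bounded below along with its adjoint is bijective. -/
lemma bijective_of_bounds (T : Z →L[ℂ] Z) (M : ℝ)
    (h1 : ∀ x, ‖x‖ ≤ M * ‖T x‖) (h2 : ∀ x, ‖x‖ ≤ M * ‖adjoint T x‖) :
    Function.Bijective T := by
  have hinj : Function.Injective T := by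
    intro x y hxy
    have : ‖x - y‖ ≤ M * ‖T (x - y)‖ := h1 _
    rw [map_sub, hxy, sub_self, norm_zero, mul_zero] at this
    exact sub_eq_zero.mp (norm_le_zero_iff.mp this)
  refine ⟨hinj, ?_⟩
  set M' : NNReal := (max M 0).toNNReal with hM'
  have h1' : ∀ x, ‖x‖ ≤ (M' : ℝ) * ‖T x‖ := by
    intro x
    refine (h1 x).trans (mul_le_mul_of_nonneg_right ?_ (norm_nonneg _))
    simp [hM', Real.coe_toNNReal', le_max_left]
  have hanti : AntilipschitzWith M' T := AddMonoidHomClass.antilipschitz_of_bound T h1'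
  have hclosed : IsClosed (Set.range T) := hanti.isClosed_range T.uniformContinuous
  have hrange : ((LinearMap.range (T : Z →ₗ[ℂ] Z) : Submodule ℂ Z) : Set Z) = Set.range T := by
    ext x; simp [LinearMap.mem_range]
  have hclosed' : IsClosed ((LinearMap.range (T : Z →ₗ[ℂ] Z) : Submodule ℂ Z) : Set Z) := by
    rw [hrange]; exact hclosed
  haveI : CompleteSpace (LinearMap.range (T : Z →ₗ[ℂ] Z) : Submodule ℂ Z) :=
    hclosed'.completeSpace_coe
  have horth : (LinearMap.range (T : Z →ₗ[ℂ] Z) : Submodule ℂ Z)ᗮ = ⊥ := by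
    rw [Submodule.eq_bot_iff]
    intro g hg
    have hTg : adjoint T g = 0 := by
      have := (Submodule.mem_orthogonal _ g).mp hg (T (adjoint T g))
        (LinearMap.mem_range_self _ _)
      rw [← adjoint_inner_right] at this
      exact inner_self_eq_zero.mp this
    have := h2 g
    rw [hTg, norm_zero, mul_zero] at this
    exact norm_le_zero_iff.mp this
  have : (LinearMap.range (T : Z →ₗ[ℂ] Z) : Submodule ℂ Z) = ⊤ :=
    Submodule.orthogonal_eq_bot_iff.mp horth
  exact LinearMap.range_eq_top.mp this

end Aux

set_option maxHeartbeats 4000000 in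
/-- Proposition `prop:ResboundZkZk`: resolvent bounds from `Z⋆` to `Z` for abstract Helmholtz
operators.  Here `H` and `Z` are complex Hilbert spaces, `ι : Z → H` is an injective dense
continuous embedding with `‖ιu‖_H ≤ ‖u‖_Z`, `a` is a continuous sesquilinear form on `Z`
(linear in the first, conjugate-linear in the second argument, so that `P = a` is a map from
`Z` to the space `Z⋆ = Z →L⋆[ℂ] ℂ` of continuous anti-linear functionals), satisfying the
continuity bound with constant `C₀` and the Gårding inequality with constants `c_G, C_G`.
The maps `P⋆` and `𝒫 - z` are specified through their defining identities.  The inner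
products are written in Mathlib's convention (conjugate-linear in the first slot), i.e.
the paper's `(h, ιv)_H` is `inner (ι v) h` below. -/
theorem abstract_helmholtz_resolvent_bounds (C₀ c_G C_G : ℝ)
    (hC₀ : 0 < C₀) (hcG : 0 < c_G) (hCG : 0 < C_G) :
    ∃ C : ℝ, 0 < C ∧
      ∀ (H Z : Type) [NormedAddCommGroup H] [InnerProductSpace ℂ H] [CompleteSpace H]
        [NormedAddCommGroup Z] [InnerProductSpace ℂ Z] [CompleteSpace Z]
        (ι : Z →L[ℂ] H),
        Function.Injective (⇑ι) → DenseRange (⇑ι) → (∀ u : Z, ‖ι u‖ ≤ ‖u‖) →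
        ∀ a : Z →L[ℂ] (Z →L⋆[ℂ] ℂ),
          (∀ u v : Z, ‖a u v‖ ≤ C₀ * ‖u‖ * ‖v‖) →
          (∀ u : Z, c_G * ‖u‖ ^ 2 - C_G * ‖ι u‖ ^ 2 ≤ (a u u).re) →
          ∀ J : H → (Z →L⋆[ℂ] ℂ),
            (∀ (h : H) (v : Z), J h v = (inner ℂ (ι v) h : ℂ)) →
            ∀ Pstar : Z → (Z →L⋆[ℂ] ℂ),
              (∀ u v : Z, Pstar u v = (starRingEnd ℂ) (a v u)) →
              ∀ Pz : ℂ → Z → (Z →L⋆[ℂ] ℂ),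
                (∀ (z : ℂ) (u v : Z),
                  Pz z u v = (a u v + (starRingEnd ℂ) (a v u)) / 2
                    - z * (inner ℂ (ι v) (ι u) : ℂ)) →
                Function.Bijective (fun u : Z => a u) →
                Function.Bijective Pstar ∧
                (∀ (u : Z →L⋆[ℂ] ℂ) (x y : Z), a x = u → Pstar y = u →
                  ‖x‖ + ‖y‖ ≤
                    C * (1 + sSup {r : ℝ | ∃ h : H, ‖h‖ ≤ 1 ∧
                      ∃ w : Z, a w = J h ∧ r = ‖ι w‖}) * ‖u‖) ∧
                (∀ z : ℂ, z.im ≠ 0 →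
                  Function.Bijective (Pz z) ∧
                    ∀ (u : Z →L⋆[ℂ] ℂ) (x : Z), Pz z x = u →
                      ‖x‖ ≤ C * (Real.sqrt (1 + ‖z‖ ^ 2) / |z.im|) * ‖u‖) := by
  obtain ⟨K₁, hK₁0, hK₁sq⟩ : ∃ k : ℝ, 0 ≤ k ∧ k ^ 2 = (1 + C_G) / c_G :=
    ⟨Real.sqrt ((1 + C_G) / c_G), Real.sqrt_nonneg _, Real.sq_sqrt (by positivity)⟩
  obtain ⟨Q, hQ0, hQsq⟩ : ∃ q : ℝ, 0 ≤ q ∧ q ^ 2 = C_G / c_G :=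
    ⟨Real.sqrt (C_G / c_G), Real.sqrt_nonneg _, Real.sq_sqrt (by positivity)⟩
  have hinv : (0:ℝ) < 1 / c_G := by positivity
  have hone : c_G * (1 / c_G) = 1 := by field_simp
  refine ⟨2 * (1 / c_G + Q * K₁) + (2 + C_G) / c_G + 1, by positivity, ?_⟩
  intro H Z _ _ _ _ _ _ ι hιinj hιdense hιbnd a ha hGar J hJ Pstar hPstar Pz hPz hP
  -- The operator A with ⟪v, A x⟫ = a x v
  obtain ⟨A, hA⟩ : ∃ A : Z →L[ℂ] Z, ∀ x v, ⟪v, A x⟫ = a x v := by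
    classical
    set Afun : Z → Z := fun x => (toDual ℂ Z).symm (conjCLM.comp (a x)) with hAf
    have hAfun : ∀ x v, ⟪v, Afun x⟫ = a x v := by
      intro x v
      have h := InnerProductSpace.toDual_symm_apply (𝕜 := ℂ) (E := Z)
        (y := conjCLM.comp (a x)) (x := v)
      rw [hAf]
      rw [← inner_conj_symm, h]
      simp
    have hmap_add : ∀ x y, Afun (x + y) = Afun x + Afun y := by
      intro x y
      apply ext_inner_left ℂ
      intro v
      rw [hAfun, inner_add_right, hAfun, hAfun, map_add, ContinuousLinearMap.add_apply]
    have hmap_smul : ∀ (c : ℂ) (x : Z), Afun (c • x) = c • Afun x := by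
      intro c x
      apply ext_inner_left ℂ
      intro v
      rw [hAfun, inner_smul_right, hAfun, map_smul, ContinuousLinearMap.smul_apply,
        smul_eq_mul]
    have hAbound : ∀ x, ‖Afun x‖ ≤ C₀ * ‖x‖ := by
      intro x
      have hself : (⟪Afun x, Afun x⟫ : ℂ) = a x (Afun x) := hAfun x (Afun x)
      have : ‖(⟪Afun x, Afun x⟫ : ℂ)‖ ≤ (C₀ * ‖x‖) * ‖Afun x‖ := by
        rw [hself]
        exact ha x (Afun x)
      exact norm_le_of_inner_self_le _ _ (by positivity) this
    exact ⟨LinearMap.mkContinuous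
      { toFun := Afun
        map_add' := hmap_add
        map_smul' := hmap_smul } C₀ hAbound, hAfun⟩
  have hAd : ∀ x v, ⟪v, adjoint A x⟫ = (starRingEnd ℂ) (a v x) := by
    intro x v
    rw [← inner_conj_symm, adjoint_inner_left, hA v x]
  -- A is bijective
  have hAbij : Function.Bijective A := by
    constructor
    · intro x y hxy
      have hxy' : a x = a y := by
        ext v
        rw [← hA, ← hA, hxy]
      exact hP.1 hxy'
    · intro g
      obtain ⟨x, hx⟩ := hP.2 (conjCLM.comp (innerSL ℂ g))
      have hx' : a x = conjCLM.comp (innerSL ℂ g) := hx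
      refine ⟨x, ext_inner_left ℂ fun v => ?_⟩
      rw [hA, hx']
      simp [inner_conj_symm]
  -- bounded inverse of A
  obtain ⟨B, hBA, hAB⟩ : ∃ B : Z →L[ℂ] Z, (∀ x, B (A x) = x) ∧ (∀ g, A (B g) = g) := by
    have hker : LinearMap.ker (A : Z →ₗ[ℂ] Z) = ⊥ := LinearMap.ker_eq_bot.mpr hAbij.1
    have hrange : LinearMap.range (A : Z →ₗ[ℂ] Z) = ⊤ := LinearMap.range_eq_top.mpr hAbij.2
    set e := ContinuousLinearEquiv.ofBijective A hker hrange with he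
    have hcoe : ∀ x, e x = A x := by
      intro x
      have hc : (e : Z →L[ℂ] Z) = A := ContinuousLinearEquiv.coe_ofBijective A hker hrange
      rw [← hc]; rfl
    refine ⟨(e.symm : Z →L[ℂ] Z), fun x => ?_, fun g => ?_⟩
    · rw [ContinuousLinearEquiv.coe_coe, ← hcoe, ContinuousLinearEquiv.symm_apply_apply]
    · rw [ContinuousLinearEquiv.coe_coe, ← hcoe, ContinuousLinearEquiv.apply_symm_apply]
  have hBnorm : ∀ x, ‖x‖ ≤ ‖B‖ * ‖A x‖ := by
    intro x
    conv_lhs => rw [← hBA x]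
    exact B.le_opNorm _
  have hAdnorm : ∀ g, ‖g‖ ≤ ‖B‖ * ‖adjoint A g‖ := by
    intro g
    rcases eq_or_ne g 0 with h0 | h0
    · simp [h0]
    · have hp : 0 < ‖g‖ := norm_pos_iff.mpr h0
      have h1 : (⟪B g, adjoint A g⟫ : ℂ) = ⟪g, g⟫ := by
        rw [adjoint_inner_right, hAB]
      have hcs := norm_inner_le_norm (𝕜 := ℂ) (B g) (adjoint A g)
      rw [h1, inner_self_eq_norm_sq_to_K] at hcs
      simp only [norm_pow, RCLike.norm_ofReal, abs_norm] at hcs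
      have hB := B.le_opNorm g
      nlinarith [norm_nonneg (adjoint A g), norm_nonneg (B g)]
  have hAdbij : Function.Bijective (adjoint A) :=
    bijective_of_bounds (adjoint A) ‖B‖ hAdnorm
      (fun x => by rw [adjoint_adjoint]; exact hBnorm x)
  -- Pstar in terms of adjoint A
  have hPstarInner : ∀ y v, Pstar y v = ⟪v, adjoint A y⟫ := by
    intro y v
    rw [hPstar y v, ← hAd y v]
  have hPstarbij : Function.Bijective Pstar := by
    constructor
    · intro y y' hyy
      apply hAdbij.1
      apply ext_inner_left ℂ
      intro v
      rw [← hPstarInner, ← hPstarInner, hyy]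
    · intro u
      obtain ⟨g, hg⟩ := riesz_anti u
      obtain ⟨y, hy⟩ := hAdbij.2 g
      refine ⟨y, ContinuousLinearMap.ext fun v => ?_⟩
      rw [hPstarInner, hy, ← hg]
  -- norm bound for J
  have hJnorm : ∀ h : H, ‖J h‖ ≤ ‖h‖ := by
    intro h
    refine ContinuousLinearMap.opNorm_le_bound _ (norm_nonneg h) fun v => ?_
    rw [hJ]
    calc ‖(⟪ι v, h⟫ : ℂ)‖ ≤ ‖ι v‖ * ‖h‖ := norm_inner_le_norm _ _
      _ ≤ ‖v‖ * ‖h‖ := mul_le_mul_of_nonneg_right (hιbnd v) (norm_nonneg h)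
      _ = ‖h‖ * ‖v‖ := mul_comm _ _
  set ρ := sSup {r : ℝ | ∃ h : H, ‖h‖ ≤ 1 ∧ ∃ w : Z, a w = J h ∧ r = ‖ι w‖} with hρdef
  clear_value ρ
  have hSbdd : BddAbove {r : ℝ | ∃ h : H, ‖h‖ ≤ 1 ∧ ∃ w : Z, a w = J h ∧ r = ‖ι w‖} := by
    refine ⟨‖B‖, fun r hr => ?_⟩
    obtain ⟨h, hh, w, hw, rfl⟩ := hr
    have h1 : ‖A w‖ ≤ 1 := by
      have hself : (⟪A w, A w⟫ : ℂ) = J h (A w) := by rw [hA, hw]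
      have hb : ‖(⟪A w, A w⟫ : ℂ)‖ ≤ 1 * ‖A w‖ := by
        rw [hself, one_mul]
        calc ‖J h (A w)‖ ≤ ‖J h‖ * ‖A w‖ := (J h).le_opNorm _
          _ ≤ 1 * ‖A w‖ := by
              have := (hJnorm h).trans hh
              exact mul_le_mul_of_nonneg_right this (norm_nonneg _)
          _ = ‖A w‖ := one_mul _
      exact norm_le_of_inner_self_le _ _ one_pos.le hb
    calc ‖ι w‖ ≤ ‖w‖ := hιbnd w
      _ ≤ ‖B‖ * ‖A w‖ := hBnorm w
      _ ≤ ‖B‖ * 1 := mul_le_mul_of_nonneg_left h1 (norm_nonneg B)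
      _ = ‖B‖ := mul_one _
  have hρ0 : 0 ≤ ρ := by
    rw [hρdef]
    refine le_csSup hSbdd ?_
    refine ⟨0, by simp, 0, ?_, by simp⟩
    ext v
    have h0 : a (0:Z) = 0 := map_zero a
    rw [h0, hJ]
    simp
  have hρmem : ∀ (h : H) (w : Z), ‖h‖ ≤ 1 → a w = J h → ‖ι w‖ ≤ ρ := by
    intro h w hh hw
    rw [hρdef]
    exact le_csSup hSbdd ⟨h, hh, w, hw, rfl⟩
  have hρ1 : (0:ℝ) ≤ 1 + ρ := by linarith
  -- Garding-based bound for solutions with data of norm at most ρ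
  have hGbound : ∀ v : Z, (a v v).re ≤ ρ → ‖ι v‖ ≤ ρ → ‖v‖ ≤ K₁ * (1 + ρ) := by
    intro v h1 h2
    have hg := hGar v
    have h3 : c_G * ‖v‖ ^ 2 ≤ ρ + C_G * ρ ^ 2 := by
      nlinarith [norm_nonneg (ι v), hCG.le,
        mul_le_mul h2 h2 (norm_nonneg (ι v)) hρ0]
    have h4 : ‖v‖ ^ 2 ≤ (K₁ * (1 + ρ)) ^ 2 := by
      have hK : c_G * (K₁ * (1 + ρ)) ^ 2 = (1 + C_G) * (1 + ρ) ^ 2 := by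
        rw [mul_pow, hK₁sq]
        field_simp
      nlinarith
    exact le_of_sq_le_sq' _ _ (norm_nonneg v) (mul_nonneg hK₁0 hρ1) h4
  have hre_bound : ∀ (h : H) (v : Z), ‖h‖ ≤ 1 → ‖ι v‖ ≤ ρ →
      ((⟪ι v, h⟫ : ℂ)).re ≤ ρ := by
    intro h v hh hv
    calc ((⟪ι v, h⟫ : ℂ)).re ≤ ‖(⟪ι v, h⟫ : ℂ)‖ := by
          exact Complex.re_le_norm _
      _ ≤ ‖ι v‖ * ‖h‖ := norm_inner_le_norm _ _
      _ ≤ ρ * 1 := mul_le_mul hv hh (norm_nonneg _) hρ0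
      _ = ρ := mul_one ρ
  have hwbound : ∀ (h : H) (w : Z), ‖h‖ ≤ 1 → a w = J h → ‖w‖ ≤ K₁ * (1 + ρ) := by
    intro h w hh hw
    have hιw := hρmem h w hh hw
    apply hGbound w ?_ hιw
    have he : a w w = ⟪ι w, h⟫ := by rw [hw, hJ]
    rw [he]
    exact hre_bound h w hh hιw
  have hybound : ∀ (h : H) (y : Z), ‖h‖ ≤ 1 → Pstar y = J h →
      ‖ι y‖ ≤ ρ ∧ ‖y‖ ≤ K₁ * (1 + ρ) := by
    intro h y hh hy
    have hiy : ‖ι y‖ ≤ ρ := by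
      apply norm_le_of_inner_le _ _ hρ0
      intro g hg
      obtain ⟨w, hw⟩ := hP.2 (J g)
      have hw' : a w = J g := hw
      have h1 : a w y = ⟪ι y, g⟫ := by rw [hw', hJ]
      have h2 : (starRingEnd ℂ) (a w y) = ⟪ι w, h⟫ := by
        rw [← hPstar y w, hy, hJ]
      calc ‖(⟪ι y, g⟫ : ℂ)‖ = ‖(starRingEnd ℂ) (a w y)‖ := by
            rw [← h1, RCLike.norm_conj]
        _ = ‖(⟪ι w, h⟫ : ℂ)‖ := by rw [h2]
        _ ≤ ‖ι w‖ * ‖h‖ := norm_inner_le_norm _ _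
        _ ≤ ρ * 1 := mul_le_mul (hρmem g w hg hw') hh (norm_nonneg _) hρ0
        _ = ρ := mul_one ρ
    refine ⟨hiy, hGbound y ?_ hiy⟩
    have h1 : (starRingEnd ℂ) (a y y) = ⟪ι y, h⟫ := by
      rw [← hPstar y y, hy, hJ]
    have h2 : (a y y).re = ((⟪ι y, h⟫ : ℂ)).re := by
      rw [← h1, Complex.conj_re]
    rw [h2]
    exact hre_bound h y hh hiy
  refine ⟨hPstarbij, ?_, ?_⟩
  · -- main bound for P and Pstar
    intro u x y hx hy
    have hux : ∀ v, a x v = u v := fun v => by rw [hx]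
    have huy : ∀ v, Pstar y v = u v := fun v => by rw [hy]
    have hKρu : (0:ℝ) ≤ K₁ * (1 + ρ) * ‖u‖ :=
      mul_nonneg (mul_nonneg hK₁0 hρ1) (norm_nonneg u)
    -- quadratic step
    have hquad : ∀ v : Z, (a v v).re ≤ ‖u‖ * ‖v‖ → ‖ι v‖ ≤ K₁ * (1 + ρ) * ‖u‖ →
        ‖v‖ ≤ (1 / c_G + Q * K₁) * (1 + ρ) * ‖u‖ := by
      intro v hre hiv
      have hg := hGar v
      have h5 : c_G * ‖v‖ ^ 2 ≤ ‖u‖ * ‖v‖ + C_G * (K₁ * (1 + ρ) * ‖u‖) ^ 2 := by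
        nlinarith [norm_nonneg (ι v), hCG.le,
          mul_le_mul hiv hiv (norm_nonneg (ι v)) hKρu]
      have hq : ‖v‖ ^ 2 ≤ (‖u‖ / c_G) * ‖v‖ + (C_G * (K₁ * (1 + ρ) * ‖u‖) ^ 2) / c_G := by
        rw [div_mul_eq_mul_div, ← add_div, le_div_iff₀ hcG]
        nlinarith
      have hqb := quad_bound ‖v‖ (‖u‖ / c_G) ((C_G * (K₁ * (1 + ρ) * ‖u‖) ^ 2) / c_G)
        (norm_nonneg v) (by positivity) (by positivity) hq
      have hsq : Real.sqrt ((C_G * (K₁ * (1 + ρ) * ‖u‖) ^ 2) / c_G)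
          = Q * (K₁ * (1 + ρ) * ‖u‖) := by
        have he : (C_G * (K₁ * (1 + ρ) * ‖u‖) ^ 2) / c_G = (Q * (K₁ * (1 + ρ) * ‖u‖)) ^ 2 := by
          rw [mul_pow Q, hQsq]; ring
        rw [he, Real.sqrt_sq (mul_nonneg hQ0 hKρu)]
      rw [hsq] at hqb
      have hu1 : ‖u‖ / c_G ≤ (1 / c_G) * ((1 + ρ) * ‖u‖) := by
        rw [div_eq_mul_one_div, mul_comm ‖u‖ (1 / c_G)]
        have : ‖u‖ ≤ (1 + ρ) * ‖u‖ := by nlinarith [norm_nonneg u]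
        exact mul_le_mul_of_nonneg_left this hinv.le
      calc ‖v‖ ≤ ‖u‖ / c_G + Q * (K₁ * (1 + ρ) * ‖u‖) := hqb
        _ ≤ (1 / c_G) * ((1 + ρ) * ‖u‖) + Q * (K₁ * (1 + ρ) * ‖u‖) := by linarith
        _ = (1 / c_G + Q * K₁) * (1 + ρ) * ‖u‖ := by ring
    -- bound for x
    have hix : ‖ι x‖ ≤ K₁ * (1 + ρ) * ‖u‖ := by
      apply norm_le_of_inner_le _ _ hKρu
      intro h hh
      obtain ⟨yh, hyh⟩ := hPstarbij.2 (J h)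
      have h1 : (⟪ι x, h⟫ : ℂ) = (starRingEnd ℂ) (u yh) := by
        calc (⟪ι x, h⟫ : ℂ) = J h x := (hJ h x).symm
          _ = Pstar yh x := by rw [hyh]
          _ = (starRingEnd ℂ) (a x yh) := hPstar yh x
          _ = (starRingEnd ℂ) (u yh) := by rw [hux]
      have h2 : ‖yh‖ ≤ K₁ * (1 + ρ) := (hybound h yh hh hyh).2
      calc ‖(⟪ι x, h⟫ : ℂ)‖ = ‖u yh‖ := by rw [h1, RCLike.norm_conj]
        _ ≤ ‖u‖ * ‖yh‖ := u.le_opNorm yh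
        _ ≤ ‖u‖ * (K₁ * (1 + ρ)) := mul_le_mul_of_nonneg_left h2 (norm_nonneg u)
        _ = K₁ * (1 + ρ) * ‖u‖ := by ring
    have hxb : ‖x‖ ≤ (1 / c_G + Q * K₁) * (1 + ρ) * ‖u‖ := by
      apply hquad x ?_ hix
      rw [hux x]
      calc (u x).re ≤ ‖u x‖ := by exact Complex.re_le_norm _
        _ ≤ ‖u‖ * ‖x‖ := u.le_opNorm x
    -- bound for y
    have hiy : ‖ι y‖ ≤ K₁ * (1 + ρ) * ‖u‖ := by
      apply norm_le_of_inner_le _ _ hKρu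
      intro h hh
      obtain ⟨w, hw⟩ := hP.2 (J h)
      have hw' : a w = J h := hw
      have h1 : a w y = ⟪ι y, h⟫ := by rw [hw', hJ]
      have h2 : (starRingEnd ℂ) (a w y) = u w := by rw [← hPstar y w, huy]
      have h3 : ‖w‖ ≤ K₁ * (1 + ρ) := hwbound h w hh hw'
      calc ‖(⟪ι y, h⟫ : ℂ)‖ = ‖(starRingEnd ℂ) (a w y)‖ := by rw [← h1, RCLike.norm_conj]
        _ = ‖u w‖ := by rw [h2]
        _ ≤ ‖u‖ * ‖w‖ := u.le_opNorm w
        _ ≤ ‖u‖ * (K₁ * (1 + ρ)) := mul_le_mul_of_nonneg_left h3 (norm_nonneg u)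
        _ = K₁ * (1 + ρ) * ‖u‖ := by ring
    have hyb : ‖y‖ ≤ (1 / c_G + Q * K₁) * (1 + ρ) * ‖u‖ := by
      apply hquad y ?_ hiy
      have h1 : (starRingEnd ℂ) (a y y) = u y := by rw [← hPstar y y, huy]
      have h2 : (a y y).re = (u y).re := by rw [← h1, Complex.conj_re]
      rw [h2]
      calc (u y).re ≤ ‖u y‖ := by exact Complex.re_le_norm _
        _ ≤ ‖u‖ * ‖y‖ := u.le_opNorm y
    have hfin : (0:ℝ) ≤ (1 + ρ) * ‖u‖ := mul_nonneg hρ1 (norm_nonneg u)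
    have hc2 : (0:ℝ) ≤ (2 + C_G) / c_G + 1 := by positivity
    nlinarith [hxb, hyb]
  · -- resolvent bounds for Pz
    -- key coercivity estimate
    have hkey : ∀ (w : ℂ), w.im ≠ 0 → ∀ x : Z,
        c_G * ‖x‖ ^ 2 ≤ (1 + (‖w‖ + C_G) / |w.im|) * ‖Pz w x x‖ := by
      intro w hw x
      have him : (0:ℝ) < |w.im| := abs_pos.mpr hw
      have hb : Pz w x x = ((((a x x).re : ℝ)) : ℂ) - w * (((‖ι x‖ ^ 2 : ℝ)) : ℂ) := by
        rw [hPz, Complex.add_conj, inner_self_eq_norm_sq_to_K]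
        push_cast
        ring_nf
        norm_num
      set b := Pz w x x with hbdef
      have him2 : |w.im| * ‖ι x‖ ^ 2 ≤ ‖b‖ := by
        have h1 : b.im = -(w.im * ‖ι x‖ ^ 2) := by
          rw [hb]
          simp [pow_two, Complex.sub_im, Complex.mul_im, Complex.mul_re,
            Complex.ofReal_im, Complex.ofReal_re]
        have h2 : |b.im| ≤ ‖b‖ := by
          exact Complex.abs_im_le_norm b
        rw [h1, abs_neg, abs_mul, abs_of_nonneg (sq_nonneg ‖ι x‖)] at h2
        exact h2
      have hre2 : (a x x).re ≤ ‖b‖ + ‖w‖ * ‖ι x‖ ^ 2 := by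
        have h1 : b.re = (a x x).re - w.re * ‖ι x‖ ^ 2 := by
          rw [hb]
          simp [pow_two, Complex.sub_re, Complex.mul_re, Complex.mul_im,
            Complex.ofReal_im, Complex.ofReal_re]
        have h2 : b.re ≤ ‖b‖ := by
          exact Complex.re_le_norm b
        have h3 : w.re * ‖ι x‖ ^ 2 ≤ ‖w‖ * ‖ι x‖ ^ 2 := by
          refine mul_le_mul_of_nonneg_right ?_ (sq_nonneg _)
          calc w.re ≤ |w.re| := le_abs_self _
            _ ≤ ‖w‖ := Complex.abs_re_le_norm w
            _ = ‖w‖ := rfl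
        nlinarith
      have hs : ‖ι x‖ ^ 2 ≤ ‖b‖ / |w.im| := by
        rw [le_div_iff₀ him]
        linarith [him2]
      have hwC : (0:ℝ) ≤ ‖w‖ + C_G := by positivity
      calc c_G * ‖x‖ ^ 2 ≤ (a x x).re + C_G * ‖ι x‖ ^ 2 := by linarith [hGar x]
        _ ≤ ‖b‖ + (‖w‖ + C_G) * ‖ι x‖ ^ 2 := by nlinarith [sq_nonneg ‖ι x‖]
        _ ≤ ‖b‖ + (‖w‖ + C_G) * (‖b‖ / |w.im|) := by
            nlinarith [mul_le_mul_of_nonneg_left hs hwC]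
        _ = (1 + (‖w‖ + C_G) / |w.im|) * ‖b‖ := by field_simp
    -- the operator realizing Pz
    obtain ⟨Tf, hT⟩ : ∃ Tf : ℂ → (Z →L[ℂ] Z), ∀ (w : ℂ) (x v : Z),
        ⟪v, Tf w x⟫ = Pz w x v := by
      refine ⟨fun w => (2:ℂ)⁻¹ • (A + adjoint A) - w • ((adjoint ι).comp ι),
        fun w x v => ?_⟩
      rw [hPz]
      simp only [ContinuousLinearMap.sub_apply, ContinuousLinearMap.smul_apply,
        ContinuousLinearMap.add_apply, ContinuousLinearMap.comp_apply]
      rw [inner_sub_right, inner_smul_right, inner_smul_right, inner_add_right,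
        hA, hAd, adjoint_inner_right]
      ring
    have hTadj : ∀ w : ℂ, adjoint (Tf w) = Tf (starRingEnd ℂ w) := by
      intro w
      apply ContinuousLinearMap.ext
      intro x
      apply ext_inner_left ℂ
      intro v
      rw [hT (starRingEnd ℂ w) x v, adjoint_inner_right, ← inner_conj_symm,
        hT w v x, hPz, hPz]
      simp only [map_sub, map_div₀, map_add, map_mul, Complex.conj_conj,
        inner_conj_symm, map_ofNat]
      ring
    -- lower bound for Tf
    have hTlow : ∀ (w : ℂ), w.im ≠ 0 → ∀ x : Z,
        ‖x‖ ≤ ((1 + (‖w‖ + C_G) / |w.im|) / c_G) * ‖Tf w x‖ := by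
      intro w hw x
      have him : (0:ℝ) < |w.im| := abs_pos.mpr hw
      have hM0 : (0:ℝ) ≤ 1 + (‖w‖ + C_G) / |w.im| := by
        have : (0:ℝ) ≤ (‖w‖ + C_G) / |w.im| := div_nonneg (by positivity) (abs_nonneg _)
        linarith
      have hkeyw := hkey w hw x
      have hPT : ‖Pz w x x‖ ≤ ‖x‖ * ‖Tf w x‖ := by
        rw [← hT w x x]
        exact norm_inner_le_norm _ _
      rcases eq_or_ne x 0 with h0 | h0
      · rw [h0, norm_zero]
        positivity
      · have hx0 : (0:ℝ) < ‖x‖ := norm_pos_iff.mpr h0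
        rw [div_mul_eq_mul_div, le_div_iff₀ hcG]
        nlinarith [mul_le_mul_of_nonneg_left hPT hM0]
    have hTbij : ∀ w : ℂ, w.im ≠ 0 → Function.Bijective (Tf w) := by
      intro w hw
      have hw' : (starRingEnd ℂ w).im ≠ 0 := by
        simpa using hw
      have h2 : ∀ x, ‖x‖ ≤ ((1 + (‖w‖ + C_G) / |w.im|) / c_G) * ‖adjoint (Tf w) x‖ := by
        intro x
        rw [hTadj w]
        have := hTlow (starRingEnd ℂ w) hw' x
        simpa only [RCLike.norm_conj, Complex.conj_im, abs_neg] using this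
      exact bijective_of_bounds _ _ (hTlow w hw) h2
    intro z hz
    have him : (0:ℝ) < |z.im| := abs_pos.mpr hz
    have hTb := hTbij z hz
    constructor
    · constructor
      · intro x x' hxx
        apply hTb.1
        apply ext_inner_left ℂ
        intro v
        rw [hT, hT, hxx]
      · intro u
        obtain ⟨g, hg⟩ := riesz_anti u
        obtain ⟨x, hxg⟩ := hTb.2 g
        refine ⟨x, ContinuousLinearMap.ext fun v => ?_⟩
        rw [← hT z x v, hxg, ← hg]
    · intro u x hxu
      set L := Real.sqrt (1 + ‖z‖ ^ 2) with hLdef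
      have hL0 : 0 ≤ L := Real.sqrt_nonneg _
      have hzL : ‖z‖ ≤ L := by
        rw [hLdef, ← Real.sqrt_sq (norm_nonneg z)]
        refine Real.sqrt_le_sqrt ?_
        nlinarith [Real.sq_sqrt (sq_nonneg ‖z‖)]
      have hL1 : (1:ℝ) ≤ L := by
        rw [hLdef, show (1:ℝ) = Real.sqrt 1 by rw [Real.sqrt_one]]
        refine Real.sqrt_le_sqrt ?_
        nlinarith [sq_nonneg ‖z‖, Real.sqrt_one]
      have himL : |z.im| ≤ L := by
        calc |z.im| ≤ ‖z‖ := Complex.abs_im_le_norm z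
          _ = ‖z‖ := rfl
          _ ≤ L := hzL
      clear_value L
      set D := L / |z.im| with hDdef
      have hD : (0:ℝ) ≤ D := by rw [hDdef]; exact div_nonneg hL0 (abs_nonneg _)
      have hM : 1 + (‖z‖ + C_G) / |z.im| ≤ (2 + C_G) * D := by
        have e1 : 1 + (‖z‖ + C_G) / |z.im| = (|z.im| + (‖z‖ + C_G)) / |z.im| := by
          field_simp
        rw [e1, hDdef, ← mul_div_assoc, div_le_div_iff_of_pos_right him]
        nlinarith [hCG.le]
      clear_value D
      have hM0 : (0:ℝ) ≤ 1 + (‖z‖ + C_G) / |z.im| := by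
        have : (0:ℝ) ≤ (‖z‖ + C_G) / |z.im| := div_nonneg (by positivity) (abs_nonneg _)
        linarith
      have hk := hkey z hz x
      rw [hxu] at hk
      have h1 : ‖u x‖ ≤ ‖u‖ * ‖x‖ := u.le_opNorm x
      rcases eq_or_ne x 0 with h0 | h0
      · rw [h0, norm_zero]
        have : (0:ℝ) < 2 * (1 / c_G + Q * K₁) + (2 + C_G) / c_G + 1 := by positivity
        positivity
      · have hx0 : (0:ℝ) < ‖x‖ := norm_pos_iff.mpr h0
        have s1 : c_G * ‖x‖ ^ 2 ≤ ((2 + C_G) * D) * (‖u‖ * ‖x‖) := by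
          calc c_G * ‖x‖ ^ 2 ≤ (1 + (‖z‖ + C_G) / |z.im|) * ‖u x‖ := hk
            _ ≤ (1 + (‖z‖ + C_G) / |z.im|) * (‖u‖ * ‖x‖) :=
                mul_le_mul_of_nonneg_left h1 hM0
            _ ≤ ((2 + C_G) * D) * (‖u‖ * ‖x‖) :=
                mul_le_mul_of_nonneg_right hM (mul_nonneg (norm_nonneg u) (norm_nonneg x))
        have s2 : ‖x‖ * c_G ≤ (2 + C_G) * D * ‖u‖ := by
          nlinarith [s1, hx0]
        have s3 : ‖x‖ ≤ ((2 + C_G) / c_G) * D * ‖u‖ := by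
          rw [div_mul_eq_mul_div, div_mul_eq_mul_div, le_div_iff₀ hcG]
          exact s2
        have s4 : (2 + C_G) / c_G ≤ 2 * (1 / c_G + Q * K₁) + (2 + C_G) / c_G + 1 := by
          have h6 : (0:ℝ) ≤ Q * K₁ := mul_nonneg hQ0 hK₁0
          linarith [hinv.le]
        calc ‖x‖ ≤ ((2 + C_G) / c_G) * D * ‖u‖ := s3
          _ ≤ (2 * (1 / c_G + Q * K₁) + (2 + C_G) / c_G + 1) * D * ‖u‖ :=
              mul_le_mul_of_nonneg_right (mul_le_mul_of_nonneg_right s4 hD) (norm_nonneg u)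
end

section
/- For every N ∈ ℕ there exists a constant K_N > 0 such that the following holds in any unital Banach algebra 𝒜: if X, Y ∈ 𝒜 with Y invertible, and if C₁, C₂ ≥ 0 and η > 0 satisfy ‖Y^{-1}‖ ≤ C₁ and ‖ad_X^j(Y)‖ ≤ C₂ η^{-j} for all integers 1 ≤ j ≤ N, then ‖ad_X^N(Y^{-1})‖ ≤ K_N (1+C₁)^{N+1} (1+C₂)^N η^{-N}. (The single-space quantitative core of the paper's Proposition on commutators with inverses ('atoms and terms' lemma).) -/
section Leibniz
variable {A : Type*} [Ring A] (X : A)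

private def Dc (X : A) : A → A := fun Z => X * Z - Z * X

private lemma Dc_mul (a b : A) : Dc X (a * b) = Dc X a * b + a * Dc X b := by
  simp only [Dc]; noncomm_ring

private lemma Dc_add (a b : A) : Dc X (a + b) = Dc X a + Dc X b := by
  simp only [Dc]; noncomm_ring

private lemma Dc_nsmul (n : ℕ) (a : A) : Dc X (n • a) = n • Dc X a := by
  simp only [Dc, smul_sub, mul_smul_comm, smul_mul_assoc]

private lemma Dc_sum {ι : Type*} (s : Finset ι) (f : ι → A) :
    Dc X (∑ i ∈ s, f i) = ∑ i ∈ s, Dc X (f i) := by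
  classical
  induction s using Finset.induction_on with
  | empty => simp [Dc]
  | insert a s h ih => rw [Finset.sum_insert h, Finset.sum_insert h, Dc_add, ih]

private lemma Dc_leibniz (n : ℕ) (a b : A) :
    (Dc X)^[n] (a * b)
      = ∑ j ∈ Finset.range (n + 1),
          n.choose j • ((Dc X)^[j] a * (Dc X)^[n - j] b) := by
  induction n with
  | zero => simp
  | succ n ih =>
      rw [Function.iterate_succ_apply', ih, Dc_sum]
      have key : ∀ j ∈ Finset.range (n + 1),
          Dc X (n.choose j • ((Dc X)^[j] a * (Dc X)^[n - j] b))
            = n.choose j • ((Dc X)^[j+1] a * (Dc X)^[n - j] b)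
              + n.choose j • ((Dc X)^[j] a * (Dc X)^[(n - j)+1] b) := by
        intro j _
        rw [Dc_nsmul, Dc_mul, smul_add, Function.iterate_succ_apply',
          Function.iterate_succ_apply']
      rw [Finset.sum_congr rfl key, Finset.sum_add_distrib]
      have h1 : ∑ j ∈ Finset.range (n + 1),
          n.choose j • ((Dc X)^[j+1] a * (Dc X)^[n - j] b)
          = ∑ j ∈ Finset.range (n + 2),
              (if j = 0 then 0 else n.choose (j-1)) • ((Dc X)^[j] a * (Dc X)^[n+1 - j] b) := by
        rw [Finset.sum_range_succ' (fun j => (if j = 0 then (0:ℕ) else n.choose (j-1)) •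
          ((Dc X)^[j] a * (Dc X)^[n+1 - j] b)) (n+1)]
        simp only [Nat.succ_ne_zero, if_false, if_true, ite_true, reduceIte, zero_smul,
          add_zero, Nat.add_sub_cancel]
        refine Finset.sum_congr rfl fun j hj => ?_
        rw [show n + 1 - (j + 1) = n - j from by omega]
      have h2 : ∑ j ∈ Finset.range (n + 1),
          n.choose j • ((Dc X)^[j] a * (Dc X)^[(n - j)+1] b)
          = ∑ j ∈ Finset.range (n + 2),
              (if j = n + 1 then 0 else n.choose j) • ((Dc X)^[j] a * (Dc X)^[n+1 - j] b) := by
        rw [Finset.sum_range_succ (fun j => (if j = n+1 then (0:ℕ) else n.choose j) •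
          ((Dc X)^[j] a * (Dc X)^[n+1 - j] b)) (n+1)]
        simp only [ite_true, reduceIte, zero_smul, add_zero]
        refine Finset.sum_congr rfl fun j hj => ?_
        rw [Finset.mem_range] at hj
        rw [if_neg (by omega), show n + 1 - j = n - j + 1 from by omega]
      rw [h1, h2, ← Finset.sum_add_distrib]
      refine Finset.sum_congr rfl fun j hj => ?_
      rw [Finset.mem_range] at hj
      rw [← add_smul]
      congr 1
      rcases j with _ | k
      · simp
      · rw [if_neg (Nat.succ_ne_zero k)]
        rcases eq_or_ne (k+1) (n+1) with heq | hne
        · have : k = n := by omega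
          subst this
          simp [Nat.choose_succ_self, Nat.choose_succ_succ']
        · rw [if_neg hne, Nat.succ_sub_one, Nat.choose_succ_succ']

private lemma Dc_one (n : ℕ) (hn : 1 ≤ n) : (Dc X)^[n] (1 : A) = 0 := by
  obtain ⟨m, rfl⟩ := Nat.exists_eq_add_of_le hn
  rw [add_comm, Function.iterate_add_apply]
  have h1 : (Dc X)^[1] (1 : A) = 0 := by simp [Dc]
  rw [h1, Function.iterate_fixed (by simp [Dc])]

end Leibniz


/-- The single-space quantitative core of Proposition `prop:atoms` ("atoms and terms"):
in any unital Banach algebra, if `Y` is invertible with `‖Y⁻¹‖ ≤ C₁` and the iterated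
commutators satisfy `‖ad_X^j(Y)‖ ≤ C₂ η⁻ʲ` for `1 ≤ j ≤ N`, then
`‖ad_X^N(Y⁻¹)‖ ≤ K_N (1+C₁)^{N+1} (1+C₂)^N η⁻ᴺ` for a constant `K_N` depending only
on `N`. -/
theorem commutator_of_inverse_bound (N : ℕ) :
    ∃ K : ℝ, 0 < K ∧
      ∀ (𝒜 : Type) [NormedRing 𝒜] [CompleteSpace 𝒜],
        ∀ X Y : 𝒜, IsUnit Y →
          ∀ C₁ C₂ η : ℝ, 0 ≤ C₁ → 0 ≤ C₂ → 0 < η →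
            ‖Ring.inverse Y‖ ≤ C₁ →
            (∀ j : ℕ, 1 ≤ j → j ≤ N → ‖(fun Z => X * Z - Z * X)^[j] Y‖ ≤ C₂ / η ^ j) →
            ‖(fun Z => X * Z - Z * X)^[N] (Ring.inverse Y)‖ ≤
              K * (1 + C₁) ^ (N + 1) * (1 + C₂) ^ N / η ^ N := by
  induction N using Nat.strong_induction_on with
  | _ N IH =>
  classical
  rcases Nat.eq_zero_or_pos N with rfl | hN
  · refine ⟨1, one_pos, fun 𝒜 _ _ X Y hY C₁ C₂ η hC₁ hC₂ hη h₁ h₂ => ?_⟩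
    simpa using h₁.trans (by nlinarith)
  set Kf : ℕ → ℝ := fun m => if h : m < N then (IH m h).choose else 1 with hKf
  have hKf_pos : ∀ m, 0 < Kf m := by
    intro m; simp only [hKf]
    split
    · exact (IH m ‹_›).choose_spec.1
    · exact one_pos
  have hKf_spec : ∀ m (h : m < N),
      ∀ (𝒜 : Type) [NormedRing 𝒜] [CompleteSpace 𝒜],
        ∀ X Y : 𝒜, IsUnit Y →
          ∀ C₁ C₂ η : ℝ, 0 ≤ C₁ → 0 ≤ C₂ → 0 < η →
            ‖Ring.inverse Y‖ ≤ C₁ →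
            (∀ j : ℕ, 1 ≤ j → j ≤ m → ‖(fun Z => X * Z - Z * X)^[j] Y‖ ≤ C₂ / η ^ j) →
            ‖(fun Z => X * Z - Z * X)^[m] (Ring.inverse Y)‖ ≤
              Kf m * (1 + C₁) ^ (m + 1) * (1 + C₂) ^ m / η ^ m := by
    intro m h
    simp only [hKf, dif_pos h]
    exact (IH m h).choose_spec.2
  set K : ℝ := 1 + ∑ i ∈ Finset.range N, (N.choose (i+1) : ℝ) * Kf (N - 1 - i) with hK
  have hSnn : 0 ≤ ∑ i ∈ Finset.range N, (N.choose (i+1) : ℝ) * Kf (N - 1 - i) :=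
    Finset.sum_nonneg fun i _ => mul_nonneg (Nat.cast_nonneg _) (hKf_pos _).le
  have hKpos : 0 < K := by rw [hK]; linarith
  refine ⟨K, hKpos, fun 𝒜 _ _ X Y hY C₁ C₂ η hC₁ hC₂ hη h₁ h₂ => ?_⟩
  set D := Dc X with hD
  have hDfun : (fun Z : 𝒜 => X * Z - Z * X) = D := rfl
  rw [hDfun] at h₂ ⊢
  set Yi := Ring.inverse Y with hYi
  have hid : Yi * (Y * D^[N] Yi) = D^[N] Yi := by
    rw [← mul_assoc, Ring.inverse_mul_cancel Y hY, one_mul]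
  have hzero : (0 : 𝒜) = ∑ j ∈ Finset.range (N + 1), N.choose j • (D^[j] Y * D^[N - j] Yi) := by
    rw [← Dc_leibniz X N Y Yi, Ring.mul_inverse_cancel Y hY, Dc_one X N hN]
  have hsplit : Y * D^[N] Yi
      = -∑ i ∈ Finset.range N, N.choose (i+1) • (D^[i+1] Y * D^[N - (i+1)] Yi) := by
    have h0 := hzero
    rw [Finset.sum_range_succ' (fun j => N.choose j • (D^[j] Y * D^[N - j] Yi)) N] at h0
    simp only [Nat.choose_zero_right, one_smul, Function.iterate_zero_apply, Nat.sub_zero] at h0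
    linear_combination (norm := abel) -h0
  have hnorm : ‖D^[N] Yi‖ ≤ C₁ *
      ∑ i ∈ Finset.range N, (N.choose (i+1) : ℝ) * (‖D^[i+1] Y‖ * ‖D^[N - (i+1)] Yi‖) := by
    calc ‖D^[N] Yi‖ = ‖Yi * (Y * D^[N] Yi)‖ := by rw [hid]
      _ ≤ ‖Yi‖ * ‖Y * D^[N] Yi‖ := norm_mul_le _ _
      _ ≤ C₁ * ‖Y * D^[N] Yi‖ := mul_le_mul_of_nonneg_right h₁ (norm_nonneg _)
      _ ≤ C₁ * ∑ i ∈ Finset.range N, (N.choose (i+1) : ℝ) *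
            (‖D^[i+1] Y‖ * ‖D^[N - (i+1)] Yi‖) := by
          refine mul_le_mul_of_nonneg_left ?_ hC₁
          rw [hsplit, norm_neg]
          refine (norm_sum_le _ _).trans (Finset.sum_le_sum fun i _ => ?_)
          exact (norm_nsmul_le).trans
            (mul_le_mul_of_nonneg_left (norm_mul_le _ _) (Nat.cast_nonneg _))
  have hterm : ∀ i ∈ Finset.range N,
      (N.choose (i+1) : ℝ) * (‖D^[i+1] Y‖ * ‖D^[N - (i+1)] Yi‖)
        ≤ (N.choose (i+1) : ℝ) * Kf (N - 1 - i) *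
            ((1 + C₁) ^ N * (1 + C₂) ^ N / η ^ N) := by
    intro i hi
    rw [Finset.mem_range] at hi
    have hm : N - (i+1) < N := by omega
    have hYb : ‖D^[i+1] Y‖ ≤ C₂ / η ^ (i+1) := h₂ (i+1) (by omega) (by omega)
    have hYib : ‖D^[N - (i+1)] Yi‖ ≤
        Kf (N - (i+1)) * (1 + C₁) ^ (N - (i+1) + 1) * (1 + C₂) ^ (N - (i+1)) / η ^ (N - (i+1)) :=
      hKf_spec (N - (i+1)) hm 𝒜 X Y hY C₁ C₂ η hC₁ hC₂ hη h₁
        (fun j hj1 hj2 => h₂ j hj1 (by omega))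
    rw [show N - 1 - i = N - (i+1) from by omega]
    set m := N - (i+1) with hmdef
    have h1C₁ : (1:ℝ) ≤ 1 + C₁ := by linarith
    have h1C₂ : (1:ℝ) ≤ 1 + C₂ := by linarith
    have hKm := hKf_pos m
    have step1 : ‖D^[i+1] Y‖ * ‖D^[N - (i+1)] Yi‖
        ≤ (C₂ / η ^ (i+1)) * (Kf m * (1 + C₁) ^ (m + 1) * (1 + C₂) ^ m / η ^ m) :=
      calc ‖D^[i+1] Y‖ * ‖D^[N - (i+1)] Yi‖
          ≤ (C₂ / η ^ (i+1)) * ‖D^[N - (i+1)] Yi‖ :=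
            mul_le_mul_of_nonneg_right hYb (norm_nonneg _)
        _ ≤ (C₂ / η ^ (i+1)) * (Kf m * (1 + C₁) ^ (m + 1) * (1 + C₂) ^ m / η ^ m) :=
            mul_le_mul_of_nonneg_left hYib (div_nonneg hC₂ (pow_pos hη _).le)
    have hchoose : (0:ℝ) ≤ (N.choose (i+1) : ℝ) := Nat.cast_nonneg _
    refine le_trans (mul_le_mul_of_nonneg_left step1 hchoose) ?_
    conv_rhs => rw [mul_assoc]
    refine mul_le_mul_of_nonneg_left ?_ hchoose
    have key : C₂ / η ^ (i+1) * (Kf m * (1 + C₁) ^ (m + 1) * (1 + C₂) ^ m / η ^ m)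
        = Kf m * ((C₂ * (1 + C₂) ^ m) * (1 + C₁) ^ (m+1)) / η ^ N := by
      rw [div_mul_div_comm, ← pow_add, show i + 1 + m = N from by omega]; ring
    rw [key]
    have b1 : C₂ * (1 + C₂) ^ m ≤ (1 + C₂) ^ N := by
      calc C₂ * (1 + C₂) ^ m ≤ (1 + C₂) * (1 + C₂) ^ m := by
            exact mul_le_mul_of_nonneg_right (by linarith) (by positivity)
        _ = (1 + C₂) ^ (m + 1) := (pow_succ' _ _).symm
        _ ≤ (1 + C₂) ^ N := pow_le_pow_right₀ h1C₂ (by omega)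
    have b2 : (1 + C₁) ^ (m+1) ≤ (1 + C₁) ^ N := pow_le_pow_right₀ h1C₁ (by omega)
    have bnum : Kf m * ((C₂ * (1 + C₂) ^ m) * (1 + C₁) ^ (m+1))
        ≤ Kf m * ((1 + C₁) ^ N * (1 + C₂) ^ N) := by
      refine mul_le_mul_of_nonneg_left ?_ hKm.le
      calc (C₂ * (1 + C₂) ^ m) * (1 + C₁) ^ (m+1)
          ≤ (1 + C₂) ^ N * (1 + C₁) ^ N :=
            mul_le_mul b1 b2 (by positivity) (by positivity)
        _ = (1 + C₁) ^ N * (1 + C₂) ^ N := mul_comm _ _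
    calc Kf m * ((C₂ * (1 + C₂) ^ m) * (1 + C₁) ^ (m+1)) / η ^ N
        ≤ Kf m * ((1 + C₁) ^ N * (1 + C₂) ^ N) / η ^ N := by gcongr
      _ = Kf m * ((1 + C₁) ^ N * (1 + C₂) ^ N / η ^ N) := by ring
  have main : ‖D^[N] Yi‖ ≤ C₁ * ((∑ i ∈ Finset.range N, (N.choose (i+1) : ℝ) * Kf (N - 1 - i)) *
      ((1 + C₁) ^ N * (1 + C₂) ^ N / η ^ N)) := by
    refine hnorm.trans (mul_le_mul_of_nonneg_left ?_ hC₁)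
    rw [Finset.sum_mul]
    exact Finset.sum_le_sum hterm
  refine main.trans ?_
  set S := ∑ i ∈ Finset.range N, (N.choose (i+1) : ℝ) * Kf (N - 1 - i) with hS
  have hSK : S ≤ K := by rw [hK]; linarith
  have h1C₁ : (1:ℝ) ≤ 1 + C₁ := by linarith
  have hηN : (0:ℝ) < η ^ N := pow_pos hη N
  have expand : C₁ * (S * ((1 + C₁) ^ N * (1 + C₂) ^ N / η ^ N))
      = S * (C₁ * (1 + C₁) ^ N) * (1 + C₂) ^ N / η ^ N := by ring
  rw [expand]
  gcongr ?_ / _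
  have b : C₁ * (1 + C₁) ^ N ≤ (1 + C₁) ^ (N+1) := by
    rw [pow_succ']
    exact mul_le_mul_of_nonneg_right (by linarith) (by positivity)
  have hmm : S * (C₁ * (1 + C₁) ^ N) ≤ K * (1 + C₁) ^ (N + 1) :=
    mul_le_mul hSK b (by positivity) hKpos.le
  exact mul_le_mul_of_nonneg_right hmm (by positivity)
end

section
/- For every z ∈ ℂ with Im z ≠ 0, the supremum over all real x of the modulus of the complex number x/(x−z) equals |z|/|Im z|; that is, sup_{x ∈ ℝ} |x/(x−z)| = |z|/|Im z|. (Exact supremum computation used in the paper's resolvent estimates in the scale of domains of powers of a self-adjoint operator.) -/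
/-- The exact supremum computation used in the paper's resolvent estimates in the scale
`𝒟ᵏ_s`: for `z ∈ ℂ` with `Im z ≠ 0`, `sup_{x ∈ ℝ} |x / (x - z)| = |z| / |Im z|`. -/
theorem sup_abs_self_div_sub (z : ℂ) (hz : z.im ≠ 0) :
    (⨆ x : ℝ, ‖(x : ℂ) / ((x : ℂ) - z)‖) = ‖z‖ / |z.im| := by
  set a := z.re with ha
  set b := z.im with hb
  have hb2 : 0 < b ^ 2 := by positivity
  have habsb : 0 < |b| := abs_pos.mpr hz
  have hs : ∀ x : ℝ, 0 < Real.sqrt ((x - a) ^ 2 + b ^ 2) := by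
    intro x; apply Real.sqrt_pos.mpr; positivity
  have habs : ∀ x : ℝ, ‖(x : ℂ) / ((x : ℂ) - z)‖
      = |x| / Real.sqrt ((x - a) ^ 2 + b ^ 2) := by
    intro x
    rw [norm_div, Complex.norm_real, Real.norm_eq_abs]
    congr 1
    rw [Complex.norm_def, Complex.normSq_apply]
    simp only [Complex.sub_re, Complex.ofReal_re, Complex.sub_im, Complex.ofReal_im]
    ring_nf; rfl
  have habsz : ‖z‖ = Real.sqrt (a ^ 2 + b ^ 2) := by
    rw [Complex.norm_def, Complex.normSq_apply]; ring_nf; rfl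
  -- the uniform bound
  have key : ∀ x : ℝ, |x| * |b| ≤ Real.sqrt (a ^ 2 + b ^ 2) * Real.sqrt ((x - a) ^ 2 + b ^ 2) := by
    intro x
    have h1 : |x| * |b| = Real.sqrt ((x * b) ^ 2) := by
      rw [Real.sqrt_sq_eq_abs, abs_mul]
    have h2 : Real.sqrt (a ^ 2 + b ^ 2) * Real.sqrt ((x - a) ^ 2 + b ^ 2)
        = Real.sqrt ((a ^ 2 + b ^ 2) * ((x - a) ^ 2 + b ^ 2)) :=
      (Real.sqrt_mul (by positivity) _).symm
    rw [h1, h2]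
    apply Real.sqrt_le_sqrt
    nlinarith [sq_nonneg (a * x - a ^ 2 - b ^ 2)]
  have hbound : ∀ x : ℝ, ‖(x : ℂ) / ((x : ℂ) - z)‖
      ≤ ‖z‖ / |z.im| := by
    intro x
    rw [habs, habsz, div_le_div_iff₀ (hs x) habsb]
    exact key x
  have hbdd : BddAbove (Set.range fun x : ℝ => ‖(x : ℂ) / ((x : ℂ) - z)‖) := by
    exact ⟨_, Set.forall_mem_range.mpr hbound⟩
  refine le_antisymm (ciSup_le hbound) ?_
  by_cases hA : a = 0
  · -- sup approached at infinity; value is 1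
    have hA' : a = 0 := hA
    by_contra h
    push_neg at h
    set S := (⨆ x : ℝ, ‖(x : ℂ) / ((x : ℂ) - z)‖) with hS
    have hle : ∀ x : ℝ, ‖(x : ℂ) / ((x : ℂ) - z)‖ ≤ S :=
      fun x => le_ciSup hbdd x
    have hS0 : 0 ≤ S := le_trans (by positivity) (hle 0)
    have hB1 : ‖z‖ / |z.im| = 1 := by
      rw [habsz, hA']
      simp [Real.sqrt_sq_eq_abs]
      exact div_self (ne_of_gt habsb)
    rw [hB1] at h
    have hS1 : S < 1 := h
    set u := Real.sqrt (1 - S ^ 2) with hu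
    have hu2 : u ^ 2 = 1 - S ^ 2 := Real.sq_sqrt (by nlinarith)
    have hupos : 0 < u := Real.sqrt_pos.mpr (by nlinarith)
    set x := (S * |b| + 1) / u with hx
    have hxpos : 0 < x := by positivity
    have hfx := hle x
    rw [habs] at hfx
    have hsx := hs x
    have hsq : Real.sqrt ((x - a) ^ 2 + b ^ 2) ^ 2 = x ^ 2 + b ^ 2 := by
      rw [Real.sq_sqrt (by positivity), hA']; ring
    have hxabs : |x| = x := abs_of_pos hxpos
    rw [hxabs, div_le_iff₀ hsx] at hfx
    -- square the inequality x ≤ S * sqrt(x² + b²)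
    have hsq2 : x ^ 2 ≤ S ^ 2 * (x ^ 2 + b ^ 2) := by
      nlinarith [hsx.le, Real.sqrt_nonneg ((x - a) ^ 2 + b ^ 2)]
    have hxu : x * u = S * |b| + 1 := by
      rw [hx]; field_simp
    have h4 : x ^ 2 * u ^ 2 = (S * |b| + 1) ^ 2 := by rw [← hxu]; ring
    have h5 : x ^ 2 * (1 - S ^ 2) ≤ S ^ 2 * b ^ 2 := by nlinarith [hsq2]
    have h6 : (S * |b| + 1) ^ 2 ≤ S ^ 2 * b ^ 2 := by
      rw [← h4, hu2]; linarith [h5]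
    nlinarith [h6, sq_abs b, mul_nonneg hS0 habsb.le]
  · -- sup attained at x* = (a² + b²) / a
    set x := (a ^ 2 + b ^ 2) / a with hx
    refine le_trans ?_ (le_ciSup hbdd x)
    rw [habs, habsz, div_le_div_iff₀ habsb (hs x)]
    -- need sqrt(a²+b²) * sqrt((x-a)²+b²) ≤ |x| * |b|
    have h2 : Real.sqrt (a ^ 2 + b ^ 2) * Real.sqrt ((x - a) ^ 2 + b ^ 2)
        = Real.sqrt ((a ^ 2 + b ^ 2) * ((x - a) ^ 2 + b ^ 2)) :=
      (Real.sqrt_mul (by positivity) _).symm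
    have h1 : |x| * |b| = Real.sqrt ((x * b) ^ 2) := by
      rw [Real.sqrt_sq_eq_abs, abs_mul]
    rw [h1, h2]
    apply Real.sqrt_le_sqrt
    have heq : (a ^ 2 + b ^ 2) * ((x - a) ^ 2 + b ^ 2) = (x * b) ^ 2 := by
      rw [hx]; field_simp; ring
    exact le_of_eq heq
end
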